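/- arXiv:2510.14860 — 5 statements merged into one kernel-verified Lean document; each statement's English description precedes it below -/
import Mathlib

section
/- Let S be a subset of ℂ × ℕ of the form {n_i + m_j·i : i ∈ ℤ_{>0}, j = 1,…,ℓ} × {0,…,N}, where (n_i) is a strictly increasing sequence of real numbers tending to infinity, m_1,…,m_ℓ are distinct real numbers, and N ∈ ℕ. If the series ∑_{(α,β)∈S} a_{α,β} e^{α·L(z)} (L(z))^β (with L(z) a fixed branch of the logarithm) converges absolutely and to 0 for all z in some nonempty open subset of ℂ \ {0}, then a_{α,β} = 0 for all (α,β) ∈ S. -/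
open Complex Filter Topology Set Function

/-!
Put `w = L z` and `F w = ∑ a_p e^{μ_p w} w^{β_p}` with `μ_{i,j} = n_i + m_j I`. Absolute
convergence at a point `w₁ ≠ 0` dominates the series on the half-plane `re w < re w₁`, so `F` is
holomorphic there. As `L` is a continuous injective branch and `F ∘ L = 0` on `U`, the zeros of
`F` accumulate inside such a half-plane, and the identity theorem gives `F = 0` on it.
For a generic real `c` the numbers `ν_p = re μ_p - c im μ_p` separate distinct exponents; along the
ray `w = -t (1 + c I)`, `t → ∞`, the term with least `ν` and, among those, largest power of `w`
outgrows the sum of all other terms, so its coefficient must vanish.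
-/

theorem norm_le_tsum_norm_compl_singleton {ι E : Type*} [NormedAddCommGroup E] [CompleteSpace E]
    {f : ι → E} (hf : Summable fun p => ‖f p‖) (h0 : ∑' p, f p = 0) (p : ι) :
    ‖f p‖ ≤ ∑' q : ↥({p}ᶜ : Set ι), ‖f q‖ := by
  have hsplit := hf.of_norm.tsum_subtype_add_tsum_subtype_compl {p}
  rw [h0, tsum_singleton, add_eq_zero_iff_eq_neg] at hsplit
  rw [hsplit, norm_neg]
  exact norm_tsum_le_tsum_norm (hf.subtype _)

theorem exists_mem_norm_lt_of_mem_nhds {E : Type*} [NormedAddCommGroup E] [NormedSpace ℝ E]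
    {s : Set E} {x : E} (hs : s ∈ 𝓝 x) (hx : x ≠ 0) : ∃ y ∈ s, ‖y‖ < ‖x‖ := by
  have hlim : Tendsto (fun t : ℝ => t • x) (𝓝[<] 1) (𝓝 x) := by
    have hc : Continuous fun t : ℝ => t • x := by fun_prop
    simpa using (hc.tendsto 1).mono_left nhdsWithin_le_nhds
  obtain ⟨t, hts, ht⟩ := ((hlim.eventually hs).and (Ioo_mem_nhdsLT zero_lt_one)).exists
  refine ⟨t • x, hts, ?_⟩
  rw [norm_smul, Real.norm_eq_abs, abs_of_pos ht.1]
  exact mul_lt_of_lt_one_left (norm_pos_iff.2 hx) ht.2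

theorem ContinuousOn.tendsto_nhdsNE_of_injOn {X Y : Type*} [TopologicalSpace X]
    [TopologicalSpace Y] {f : X → Y} {s : Set X} {x : X} (hf : ContinuousOn f s) (hs : IsOpen s)
    (hinj : InjOn f s) (hx : x ∈ s) : Tendsto f (𝓝[≠] x) (𝓝[≠] (f x)) := by
  refine tendsto_nhdsWithin_iff.2 ⟨((hf.continuousAt (hs.mem_nhds hx)).tendsto).mono_left
    nhdsWithin_le_nhds, ?_⟩
  filter_upwards [self_mem_nhdsWithin, mem_nhdsWithin_of_mem_nhds (hs.mem_nhds hx)]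
    with y hy hys using fun h => hy (hinj hys hx h)

theorem Filter.tendsto_fst_cofinite {α β : Type*} [Finite β] :
    Tendsto (Prod.fst : α × β → α) cofinite cofinite :=
  Tendsto.cofinite_of_finite_preimage_singleton fun x =>
    (((finite_singleton x).prod finite_univ).subset fun _ hp => ⟨hp, trivial⟩).to_subtype

theorem pow_le_pow_mul_max_one_pow {x y : ℝ} (hx : 0 ≤ x) (hy : 0 < y) {k N : ℕ} (hk : k ≤ N) :
    x ^ k ≤ y ^ k * max 1 (x / y) ^ N := by
  calc x ^ k = y ^ k * (x / y) ^ k := by rw [div_pow, mul_div_cancel₀ _ (pow_ne_zero _ hy.ne')]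
    _ ≤ y ^ k * max 1 (x / y) ^ k := by gcongr; exact le_max_right _ _
    _ ≤ y ^ k * max 1 (x / y) ^ N := by gcongr; exact le_max_left _ _

theorem re_mul_le_of_re_nonpos {c M : ℝ} {z w : ℂ} (hre : c ≤ z.re) (him : |z.im| ≤ M)
    (hw : w.re ≤ 0) :
    (z * w).re ≤ c * w.re + M * ‖w‖ := by
  have h₁ : z.re * w.re ≤ c * w.re := mul_le_mul_of_nonpos_right hre hw
  have h₂ : -(z.im * w.im) ≤ M * ‖w‖ :=
    calc -(z.im * w.im) ≤ |z.im| * |w.im| := by rw [← abs_mul]; exact neg_le_abs _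
      _ ≤ M * ‖w‖ := mul_le_mul him (abs_im_le_norm w) (abs_nonneg _) ((abs_nonneg _).trans him)
  rw [mul_re]
  linarith

theorem Set.Countable.exists_injOn_re_sub_mul_im {S : Set ℂ} (hS : S.Countable) :
    ∃ c : ℝ, InjOn (fun z => z.re - c * z.im) S := by
  set B : Set ℝ := ⋃ z ∈ S, ⋃ z' ∈ S, {c | z ≠ z' ∧ z.re - c * z.im = z'.re - c * z'.im}
  have hB : B.Countable := hS.biUnion fun z _ => hS.biUnion fun z' _ => by
    refine Set.Subsingleton.countable fun c₁ ⟨hne, h₁⟩ c₂ ⟨_, h₂⟩ => ?_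
    have him : z.im - z'.im ≠ 0 := fun h =>
      hne (Complex.ext (by linear_combination h₁ + c₁ * h) (by linear_combination h))
    exact mul_right_cancel₀ him (by linear_combination h₂ - h₁)
  obtain ⟨c, hc⟩ := (hB.dense_compl ℝ).nonempty
  refine ⟨c, fun z hz z' hz' h => ?_⟩
  by_contra hne
  exact hc (mem_iUnion₂.2 ⟨z, hz, mem_iUnion₂.2 ⟨z', hz', hne, h⟩⟩)

section Dominance

variable {ι : Type*} {ν : ι → ℝ}

theorem Filter.Tendsto.exists_pos_forall_lt_add_imp_le (hν : Tendsto ν cofinite atTop) (x : ℝ) :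
    ∃ δ > 0, ∀ q, ν q < x + δ → ν q ≤ x := by
  set V := ν '' {q | x < ν q ∧ ν q < x + 1}
  have hV : V.Finite := ((eventually_cofinite.1 (hν.eventually_ge_atTop (x + 1))).subset
    fun q hq => not_le.2 hq.2).image ν
  obtain ⟨ε, hε, hball⟩ := Metric.isOpen_iff.1 hV.isClosed.isOpen_compl x
    fun ⟨q, hq, hqx⟩ => hq.1.ne' hqx
  refine ⟨min ε 1, lt_min hε one_pos, fun q hq => not_lt.1 fun hxq => ?_⟩
  refine hball ?_ (mem_image_of_mem ν ⟨hxq, hq.trans_le (add_le_add_right (min_le_right _ _) x)⟩)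
  rw [Metric.mem_ball, Real.dist_eq, abs_lt]
  constructor <;> linarith [min_le_left ε 1]

theorem Filter.Tendsto.exists_lex_min (hν : Tendsto ν cofinite atTop) (β : ι → ℕ) {S : Set ι}
    (hS : S.Nonempty) : ∃ p₀ ∈ S, ∀ q ∈ S, ν p₀ ≤ ν q ∧ (ν q = ν p₀ → β q ≤ β p₀) := by
  obtain ⟨p, hp⟩ := hS
  have hfin : (S ∩ {q | ν q ≤ ν p}).Finite :=
    (eventually_cofinite.1 (hν.eventually_gt_atTop (ν p))).subset fun q hq => not_lt.2 hq.2
  obtain ⟨p₀, ⟨hp₀S, hp₀p⟩, hmin⟩ :=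
    Set.exists_min_image _ (fun q => toLex (ν q, -(β q : ℤ))) hfin ⟨p, hp, le_refl (ν p)⟩
  refine ⟨p₀, hp₀S, fun q hq => ?_⟩
  by_cases hqp : ν q ≤ ν p
  · rcases Prod.Lex.toLex_le_toLex.1 (hmin q ⟨hq, hqp⟩) with h | ⟨h, h'⟩
    · exact ⟨h.le, fun e => absurd e h.ne'⟩
    · exact ⟨h.le, fun _ => by omega⟩
  · have h := hp₀p.trans_lt (not_le.1 hqp)
    exact ⟨h.le, fun e => absurd e h.ne'⟩

theorem exp_neg_mul_mul_pow_le_of_add_le {t x x₀ δ : ℝ} {k k₀ N : ℕ} (ht : 1 ≤ t)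
    (hx : x₀ + δ ≤ x) (hk : k ≤ N) :
    Real.exp (-(t * x)) * t ^ k ≤
      Real.exp (-x) * (Real.exp (x₀ - (t - 1) * δ) * t ^ N) * (Real.exp (-(t * x₀)) * t ^ k₀) := by
  have hexp : Real.exp (-(t * x)) ≤
      Real.exp (-x) * Real.exp (x₀ - (t - 1) * δ) * Real.exp (-(t * x₀)) := by
    rw [← Real.exp_add, ← Real.exp_add, Real.exp_le_exp]
    nlinarith
  have hpow : t ^ k ≤ t ^ N * t ^ k₀ := by
    rw [← pow_add]
    exact pow_le_pow_right₀ ht (by omega)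
  calc _ ≤ Real.exp (-x) * Real.exp (x₀ - (t - 1) * δ) * Real.exp (-(t * x₀)) *
        (t ^ N * t ^ k₀) := by gcongr
    _ = _ := by ring

theorem exp_neg_mul_mul_pow_le_of_lt {t x₀ : ℝ} {k k₀ : ℕ} (ht : 1 ≤ t) (hk : k < k₀) :
    Real.exp (-(t * x₀)) * t ^ k ≤
      Real.exp (-x₀) * (Real.exp x₀ * t⁻¹) * (Real.exp (-(t * x₀)) * t ^ k₀) := by
  have hpow : t ^ k ≤ t⁻¹ * t ^ k₀ := by
    rw [← div_eq_inv_mul, le_div_iff₀ (by positivity), ← pow_succ]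
    exact pow_le_pow_right₀ ht hk
  calc _ ≤ Real.exp (-(t * x₀)) * (t⁻¹ * t ^ k₀) := by gcongr
    _ = _ := by rw [Real.exp_neg x₀]; field_simp

theorem exp_neg_mul_mul_pow_le {t x x₀ δ : ℝ} {k k₀ N : ℕ} (ht : 1 ≤ t)
    (h : x₀ + δ ≤ x ∧ k ≤ N ∨ x = x₀ ∧ k < k₀) :
    Real.exp (-(t * x)) * t ^ k ≤ Real.exp (-x) *
      ((Real.exp (x₀ - (t - 1) * δ) * t ^ N + Real.exp x₀ * t⁻¹) *
        (Real.exp (-(t * x₀)) * t ^ k₀)) := by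
  rcases h with ⟨hx, hk⟩ | ⟨rfl, hk⟩
  · calc _ ≤ _ := exp_neg_mul_mul_pow_le_of_add_le (k₀ := k₀) ht hx hk
      _ = Real.exp (-x) * ((Real.exp (x₀ - (t - 1) * δ) * t ^ N) *
            (Real.exp (-(t * x₀)) * t ^ k₀)) := by ring
      _ ≤ _ := by gcongr; exact le_add_of_nonneg_right (by positivity)
  · calc _ ≤ _ := exp_neg_mul_mul_pow_le_of_lt ht hk
      _ = Real.exp (-x) * ((Real.exp x * t⁻¹) * (Real.exp (-(t * x)) * t ^ k₀)) := by ring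
      _ ≤ _ := by gcongr; exact le_add_of_nonneg_left (by positivity)

theorem tendsto_exp_sub_mul_pow_add_exp_mul_inv (x₀ : ℝ) {δ : ℝ} (hδ : 0 < δ) (N : ℕ) :
    Tendsto (fun t => Real.exp (x₀ - (t - 1) * δ) * t ^ N + Real.exp x₀ * t⁻¹) atTop (𝓝 0) := by
  have h₁ := (tendsto_rpow_mul_exp_neg_mul_atTop_nhds_zero N δ hδ).const_mul (Real.exp (x₀ + δ))
  have h₂ := tendsto_inv_atTop_zero.const_mul (Real.exp x₀)
  rw [mul_zero] at h₁ h₂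
  refine zero_add (0 : ℝ) ▸ (h₁.add h₂).congr fun t => ?_
  rw [Real.rpow_natCast, mul_left_comm, ← Real.exp_add]
  ring_nf

theorem eq_zero_of_forall_le_tsum_compl {A : ι → ℝ} {β : ι → ℕ} {N : ℕ} (hA : ∀ p, 0 ≤ A p)
    (hβ : ∀ p, β p ≤ N) (hν : Tendsto ν cofinite atTop) (hinj : Injective fun p => (ν p, β p))
    (hsum : Summable fun p => A p * Real.exp (-ν p))
    (hdom : ∀ t ≥ (1 : ℝ), ∀ p, A p * Real.exp (-(t * ν p)) * t ^ β p ≤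
      ∑' q : ↥({p}ᶜ : Set ι), A q * Real.exp (-(t * ν q)) * t ^ β q)
    (p : ι) : A p = 0 := by
  by_contra hp
  -- `p₀` minimises `ν` and then maximises `β` on the support of `A`. Normalised by the size `D` of
  -- its term, every other term is at most its value at `t = 1` times `φ t`, and `φ t → 0`.
  obtain ⟨p₀, hp₀, hmin⟩ := hν.exists_lex_min β (S := {p | A p ≠ 0}) ⟨p, hp⟩
  obtain ⟨δ, hδ, hgap⟩ := hν.exists_pos_forall_lt_add_imp_le (ν p₀)
  set φ : ℝ → ℝ := fun t => Real.exp (ν p₀ - (t - 1) * δ) * t ^ N + Real.exp (ν p₀) * t⁻¹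
  have hφ : Tendsto φ atTop (𝓝 0) := tendsto_exp_sub_mul_pow_add_exp_mul_inv _ hδ N
  have hbound : ∀ t ≥ (1 : ℝ), A p₀ ≤ φ t * ∑' q, A q * Real.exp (-ν q) := by
    intro t ht
    set D := Real.exp (-(t * ν p₀)) * t ^ β p₀
    have hterm : ∀ q : ↥({p₀}ᶜ : Set ι),
        A q * Real.exp (-(t * ν q)) * t ^ β q ≤ A q * Real.exp (-ν q) * (φ t * D) := by
      rintro ⟨q, hq⟩
      rcases eq_or_ne (A q) 0 with hAq | hAq
      · simp [hAq]
      obtain ⟨hle, hβle⟩ := hmin q hAq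
      rw [mul_assoc, mul_assoc]
      refine mul_le_mul_of_nonneg_left (exp_neg_mul_mul_pow_le ht ?_) (hA q)
      rcases lt_or_ge (ν q) (ν p₀ + δ) with hlt | hge
      · have hνq : ν q = ν p₀ := le_antisymm (hgap q hlt) hle
        exact .inr ⟨hνq, lt_of_le_of_ne (hβle hνq) fun h => hq (hinj (by simp [hνq, h]))⟩
      · exact .inl ⟨hge, hβ q⟩
    have hsub : Summable fun q : ↥({p₀}ᶜ : Set ι) => A q * Real.exp (-ν q) := hsum.subtype _
    have hD : 0 < D := by positivity
    refine le_of_mul_le_mul_right ?_ hD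
    calc A p₀ * D = A p₀ * Real.exp (-(t * ν p₀)) * t ^ β p₀ := by ring
      _ ≤ ∑' q : ↥({p₀}ᶜ : Set ι), A q * Real.exp (-(t * ν q)) * t ^ β q := hdom t ht p₀
      _ ≤ ∑' q : ↥({p₀}ᶜ : Set ι), A q * Real.exp (-ν q) * (φ t * D) :=
        Summable.tsum_le_tsum hterm ((hsub.mul_right _).of_nonneg_of_le
          (fun q => mul_nonneg (mul_nonneg (hA q) (Real.exp_pos _).le) (by positivity)) hterm)
          (hsub.mul_right _)
      _ = (∑' q : ↥({p₀}ᶜ : Set ι), A q * Real.exp (-ν q)) * (φ t * D) := tsum_mul_right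
      _ ≤ (∑' q, A q * Real.exp (-ν q)) * (φ t * D) := by
        gcongr
        exact hsum.tsum_subtype_le _ _ fun q => mul_nonneg (hA q) (Real.exp_pos _).le
      _ = _ := by ring
  have : A p₀ ≤ 0 := by
    simpa using ge_of_tendsto (hφ.mul_const _) (eventually_atTop.2 ⟨1, hbound⟩)
  exact hp₀ (le_antisymm this (hA p₀))

end Dominance

noncomputable def expPolyTerm {ι : Type*} (a μ : ι → ℂ) (β : ι → ℕ) (w : ℂ) (p : ι) : ℂ :=
  a p * Complex.exp (μ p * w) * w ^ β p

section ExpPolyTerm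

variable {ι : Type*} {a μ : ι → ℂ} {β : ι → ℕ} {N : ℕ} {c M : ℝ}

theorem norm_expPolyTerm (a μ : ι → ℂ) (β : ι → ℕ) (w : ℂ) (p : ι) :
    ‖expPolyTerm a μ β w p‖ = ‖a p‖ * Real.exp (μ p * w).re * ‖w‖ ^ β p := by
  simp [expPolyTerm, norm_exp]

theorem norm_expPolyTerm_le (hre : ∀ p, c ≤ (μ p).re) (him : ∀ p, |(μ p).im| ≤ M)
    (hβ : ∀ p, β p ≤ N) {w w₁ : ℂ} (hw₁ : w₁ ≠ 0) (hw : w.re ≤ w₁.re) (p : ι) :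
    ‖expPolyTerm a μ β w p‖ ≤ ‖expPolyTerm a μ β w₁ p‖ *
      (Real.exp (c * (w - w₁).re + M * ‖w - w₁‖) * max 1 (‖w‖ / ‖w₁‖) ^ N) := by
  have hexp : Real.exp (μ p * w).re ≤
      Real.exp (μ p * w₁).re * Real.exp (c * (w - w₁).re + M * ‖w - w₁‖) := by
    rw [← Real.exp_add, Real.exp_le_exp]
    have := re_mul_le_of_re_nonpos (hre p) (him p) (w := w - w₁) (by simpa using hw)
    rw [mul_sub, sub_re] at this
    linarith
  have hpow := pow_le_pow_mul_max_one_pow (norm_nonneg w) (norm_pos_iff.2 hw₁) (hβ p)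
  rw [norm_expPolyTerm, norm_expPolyTerm]
  calc _ ≤ ‖a p‖ * (Real.exp (μ p * w₁).re * Real.exp (c * (w - w₁).re + M * ‖w - w₁‖)) *
        (‖w₁‖ ^ β p * max 1 (‖w‖ / ‖w₁‖) ^ N) := by gcongr
    _ = _ := by ring

theorem summable_norm_expPolyTerm_of_re_le (hre : ∀ p, c ≤ (μ p).re)
    (him : ∀ p, |(μ p).im| ≤ M) (hβ : ∀ p, β p ≤ N) {w w₁ : ℂ} (hw₁ : w₁ ≠ 0)
    (hs : Summable fun p => ‖expPolyTerm a μ β w₁ p‖) (hw : w.re ≤ w₁.re) :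
    Summable fun p => ‖expPolyTerm a μ β w p‖ :=
  (hs.mul_right _).of_nonneg_of_le (fun _ => norm_nonneg _)
    (norm_expPolyTerm_le hre him hβ hw₁ hw)

theorem differentiableOn_tsum_expPolyTerm (hre : ∀ p, c ≤ (μ p).re)
    (him : ∀ p, |(μ p).im| ≤ M) (hβ : ∀ p, β p ≤ N) {w₁ : ℂ} (hw₁ : w₁ ≠ 0)
    (hs : Summable fun p => ‖expPolyTerm a μ β w₁ p‖) :
    DifferentiableOn ℂ (fun w => ∑' p, expPolyTerm a μ β w p) {w | w.re < w₁.re} := by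
  set C : ℂ → ℝ := fun w =>
    Real.exp (c * (w - w₁).re + M * ‖w - w₁‖) * max 1 (‖w‖ / ‖w₁‖) ^ N
  have hC : Continuous C := by fun_prop
  intro w₀ hw₀
  obtain ⟨ε, hε, hball⟩ :
      ∃ ε > 0, Metric.ball w₀ ε ⊆ {w | w.re < w₁.re} ∩ {w | C w < C w₀ + 1} :=
    Metric.isOpen_iff.1 ((isOpen_lt continuous_re continuous_const).inter
      (isOpen_lt hC continuous_const)) w₀ ⟨hw₀, lt_add_one (C w₀)⟩
  have hdiff : DifferentiableOn ℂ (fun w => ∑' p, expPolyTerm a μ β w p) (Metric.ball w₀ ε) := by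
    refine differentiableOn_tsum_of_summable_norm (hs.mul_right (C w₀ + 1))
      (fun p => Differentiable.differentiableOn (by unfold expPolyTerm; fun_prop))
      Metric.isOpen_ball fun p w hw => ?_
    exact (norm_expPolyTerm_le hre him hβ hw₁ (hball hw).1.le p).trans
      (mul_le_mul_of_nonneg_left (hball hw).2.le (norm_nonneg _))
  exact (hdiff.differentiableAt (Metric.ball_mem_nhds w₀ hε)).differentiableWithinAt

theorem eqOn_zero_tsum_expPolyTerm_of_frequently (hre : ∀ p, c ≤ (μ p).re)
    (him : ∀ p, |(μ p).im| ≤ M) (hβ : ∀ p, β p ≤ N) {w₀ w₁ : ℂ} (hw₁ : w₁ ≠ 0)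
    (hs : Summable fun p => ‖expPolyTerm a μ β w₁ p‖) (hw₀ : w₀.re < w₁.re)
    (hfreq : ∃ᶠ w in 𝓝[≠] w₀, ∑' p, expPolyTerm a μ β w p = 0) :
    EqOn (fun w => ∑' p, expPolyTerm a μ β w p) 0 {w | w.re < w₁.re} :=
  ((differentiableOn_tsum_expPolyTerm hre him hβ hw₁ hs).analyticOnNhd
    (isOpen_lt continuous_re continuous_const)).eqOn_zero_of_preconnected_of_frequently_eq_zero
    (convex_halfSpace_re_lt _).isPreconnected hw₀ hfreq

theorem eq_zero_of_tsum_expPolyTerm_eq_zero [Countable ι] (hβ : ∀ p, β p ≤ N)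
    (hinj : Injective fun p => (μ p, β p)) (hre : Tendsto (fun p => (μ p).re) cofinite atTop)
    (him : ∀ p, |(μ p).im| ≤ M) {σ : ℝ}
    (hs : ∀ w : ℂ, w.re < σ → Summable fun p => ‖expPolyTerm a μ β w p‖)
    (h0 : ∀ w : ℂ, w.re < σ → ∑' p, expPolyTerm a μ β w p = 0) (p : ι) : a p = 0 := by
  obtain ⟨c, hc⟩ := (countable_range μ).exists_injOn_re_sub_mul_im
  set R : ℝ := |σ| + 1
  have hR : 0 < R := by positivity
  set d : ℂ := R * (1 + c * I)
  set ν : ι → ℝ := fun p => R * ((μ p).re - c * (μ p).im)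
  have hν : Tendsto ν cofinite atTop := by
    refine Tendsto.const_mul_atTop hR ?_
    simp_rw [sub_eq_add_neg]
    refine tendsto_atTop_add_right_of_le _ (-(|c| * M)) hre fun p => ?_
    rw [neg_le_neg_iff]
    calc c * (μ p).im ≤ |c| * |(μ p).im| := by rw [← abs_mul]; exact le_abs_self _
      _ ≤ |c| * M := by gcongr; exact him p
  have hνinj : Injective fun p => (ν p, β p) := by
    intro p q h
    simp only [Prod.mk.injEq] at h
    exact hinj (Prod.ext (hc (mem_range_self p) (mem_range_self q)
      (mul_left_cancel₀ hR.ne' h.1)) h.2)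
  have hnorm : ∀ t : ℝ, 0 ≤ t → ∀ q, ‖expPolyTerm a μ β (-(t * d)) q‖ =
      ‖a q‖ * ‖d‖ ^ β q * Real.exp (-(t * ν q)) * t ^ β q := by
    intro t ht q
    rw [norm_expPolyTerm, norm_neg, norm_mul, norm_real, Real.norm_of_nonneg ht]
    have : (μ q * -(↑t * d)).re = -(t * ν q) := by simp [d, ν]; ring
    rw [this, mul_pow]
    ring
  have hre_lt : ∀ t : ℝ, 1 ≤ t → (-(t * d)).re < σ := by
    intro t ht
    simp [d]
    nlinarith [le_abs_self σ, neg_abs_le σ]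
  have hA := eq_zero_of_forall_le_tsum_compl (A := fun q => ‖a q‖ * ‖d‖ ^ β q)
    (fun q => by positivity) hβ hν hνinj ?_ ?_ p
  · have hd : d ≠ 0 :=
      mul_ne_zero (ofReal_ne_zero.2 hR.ne') fun h => by simpa using congrArg re h
    simpa [hd] using hA
  · exact (hs _ (hre_lt 1 le_rfl)).congr fun q => by rw [hnorm 1 zero_le_one]; simp
  · intro t ht q
    simp only [← hnorm t (by linarith)]
    exact norm_le_tsum_norm_compl_singleton (hs _ (hre_lt t ht)) (h0 _ (hre_lt t ht)) q

theorem exists_forall_re_lt_tsum_expPolyTerm_eq_zero (hre : ∀ p, c ≤ (μ p).re)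
    (him : ∀ p, |(μ p).im| ≤ M) (hβ : ∀ p, β p ≤ N) {L : ℂ → ℂ} {U : Set ℂ} (hU : IsOpen U)
    (hUne : U.Nonempty) (hL : ∀ z ∈ U, Complex.exp (L z) = z) (hLc : ContinuousOn L U)
    (habs : ∀ z ∈ U, Summable fun p => ‖expPolyTerm a μ β (L z) p‖)
    (hsum : ∀ z ∈ U, ∑' p, expPolyTerm a μ β (L z) p = 0) :
    ∃ σ : ℝ, ∀ w : ℂ, w.re < σ →
      (Summable fun p => ‖expPolyTerm a μ β w p‖) ∧ ∑' p, expPolyTerm a μ β w p = 0 := by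
  -- `z₀ ≠ 1` makes `L z₀ ≠ 0`, and `‖z₁‖ < ‖z₀‖` puts `L z₁` inside the half-plane.
  obtain ⟨z₀, hz₀U, hz₀⟩ := (dense_compl_singleton (1 : ℂ)).inter_open_nonempty U hU hUne
  have hw₀ : L z₀ ≠ 0 := fun h => hz₀ (by rw [← hL z₀ hz₀U, h, exp_zero]; rfl)
  obtain ⟨z₁, hz₁U, hz₁⟩ := exists_mem_norm_lt_of_mem_nhds (hU.mem_nhds hz₀U)
    (by rw [← hL z₀ hz₀U]; exact exp_ne_zero _)
  have hlt : (L z₁).re < (L z₀).re := by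
    rwa [← Real.exp_lt_exp, ← norm_exp, ← norm_exp, hL z₁ hz₁U, hL z₀ hz₀U]
  have hLinj : InjOn L U := (show LeftInvOn Complex.exp L U from fun z hz => hL z hz).injOn
  have hfreq : ∃ᶠ w in 𝓝[≠] L z₁, ∑' p, expPolyTerm a μ β w p = 0 :=
    (hLc.tendsto_nhdsNE_of_injOn hU hLinj hz₁U).frequently
      (eventually_of_mem (mem_nhdsWithin_of_mem_nhds (hU.mem_nhds hz₁U)) hsum).frequently
  exact ⟨(L z₀).re, fun w hw =>
    ⟨summable_norm_expPolyTerm_of_re_le hre him hβ hw₀ (habs z₀ hz₀U) hw.le,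
      eqOn_zero_tsum_expPolyTerm_of_frequently hre him hβ hw₀ (habs z₀ hz₀U) hlt hfreq hw⟩⟩

end ExpPolyTerm

theorem stmt1_general (n : ℕ → ℝ) (hn : StrictMono n) (hn' : Filter.Tendsto n Filter.atTop Filter.atTop)
    (ℓ : ℕ) (m : Fin ℓ → ℝ) (hm : Function.Injective m) (N : ℕ)
    (a : ℕ → Fin ℓ → Fin (N + 1) → ℂ)
    (L : ℂ → ℂ) (U : Set ℂ) (hU : IsOpen U) (hUne : U.Nonempty)
    (hL : ∀ z ∈ U, Complex.exp (L z) = z) (hLc : ContinuousOn L U)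
    (habs : ∀ z ∈ U, Summable (fun p : ℕ × Fin ℓ × Fin (N + 1) =>
      ‖a p.1 p.2.1 p.2.2 * Complex.exp ((↑(n p.1) + ↑(m p.2.1) * Complex.I) * L z) *
        (L z) ^ (p.2.2 : ℕ)‖))
    (hsum : ∀ z ∈ U, (∑' p : ℕ × Fin ℓ × Fin (N + 1),
      a p.1 p.2.1 p.2.2 * Complex.exp ((↑(n p.1) + ↑(m p.2.1) * Complex.I) * L z) *
        (L z) ^ (p.2.2 : ℕ)) = 0) :
    ∀ i j β, a i j β = 0 := by
  intro i j k
  set μ : ℕ × Fin ℓ × Fin (N + 1) → ℂ := fun p => n p.1 + m p.2.1 * I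
  obtain ⟨M, hM⟩ := (finite_range fun j => |m j|).bddAbove
  have hre : ∀ p, n 0 ≤ (μ p).re := fun p => by simpa [μ] using hn.monotone (Nat.zero_le p.1)
  have him : ∀ p, |(μ p).im| ≤ M := fun p => by simpa [μ] using hM (mem_range_self p.2.1)
  have hβ : ∀ p : ℕ × Fin ℓ × Fin (N + 1), (p.2.2 : ℕ) ≤ N := fun p => p.2.2.is_le
  have hinj : Injective fun p => (μ p, (p.2.2 : ℕ)) := by
    rintro ⟨i, j, k⟩ ⟨i', j', k'⟩ h
    simp only [μ, Prod.mk.injEq, Complex.ext_iff, add_re, add_im, mul_re, mul_im, ofReal_re,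
      ofReal_im, I_re, I_im, mul_zero, mul_one, sub_self, add_zero, zero_add] at h
    obtain ⟨⟨hi, hj⟩, hk⟩ := h
    rw [hn.injective hi, hm hj, Fin.ext hk]
  have hμre : (fun p => (μ p).re) = n ∘ Prod.fst := by ext p; simp [μ]
  have hμ : Tendsto (fun p => (μ p).re) cofinite atTop :=
    hμre ▸ (Nat.cofinite_eq_atTop ▸ hn').comp tendsto_fst_cofinite
  obtain ⟨σ, hσ⟩ := exists_forall_re_lt_tsum_expPolyTerm_eq_zero
    (a := fun p : ℕ × Fin ℓ × Fin (N + 1) => a p.1 p.2.1 p.2.2) hre him hβ hU hUne hL hLc habs hsum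
  exact eq_zero_of_tsum_expPolyTerm_eq_zero hβ hinj hμ him (fun w hw => (hσ w hw).1)
    (fun w hw => (hσ w hw).2) (i, j, k)

/-- Unique expansion property for sets of the form
`{n_i + m_j·I : i ∈ ℤ_{>0}, j = 1,…,ℓ} × {0,…,N}`: if the series
`∑ a_{i,j,β} e^{(n_i + m_j I)·L(z)} (L(z))^β` converges absolutely to `0`
for all `z` in some nonempty open subset of `ℂ \ {0}` (with `L` a fixed branch of
the logarithm), then all coefficients vanish. -/
theorem stmt1 (n : ℕ → ℝ) (hn : StrictMono n) (hn' : Filter.Tendsto n Filter.atTop Filter.atTop)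
    (ℓ : ℕ) (m : Fin ℓ → ℝ) (hm : Function.Injective m) (N : ℕ)
    (a : ℕ → Fin ℓ → Fin (N + 1) → ℂ)
    (L : ℂ → ℂ) (U : Set ℂ) (hU : IsOpen U) (hUne : U.Nonempty) (hU0 : (0 : ℂ) ∉ U)
    (hL : ∀ z ∈ U, Complex.exp (L z) = z) (hLc : ContinuousOn L U)
    (habs : ∀ z ∈ U, Summable (fun p : ℕ × Fin ℓ × Fin (N + 1) =>
      ‖a p.1 p.2.1 p.2.2 * Complex.exp ((↑(n p.1) + ↑(m p.2.1) * Complex.I) * L z) *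
        (L z) ^ (p.2.2 : ℕ)‖))
    (hsum : ∀ z ∈ U, (∑' p : ℕ × Fin ℓ × Fin (N + 1),
      a p.1 p.2.1 p.2.2 * Complex.exp ((↑(n p.1) + ↑(m p.2.1) * Complex.I) * L z) *
        (L z) ^ (p.2.2 : ℕ)) = 0) :
    ∀ i j β, a i j β = 0 :=
  stmt1_general n hn hn' ℓ m hm N a L U hU hUne hL hLc habs hsum
end

section
/- Suppose S and T are unique expansion sets (subsets of ℂ × ℕ with the property that an absolutely convergent series ∑ a_{α,β} z^α (log z)^β over the set converging to 0 on a nonempty open subset of ℂ× forces all coefficients to vanish). If two double series ∑_{(α,β)∈S}∑_{(γ,δ)∈T} a_{α,β,γ,δ} z_1^α (log z_1)^β z_2^γ (log z_2)^δ and ∑_{(α,β)∈S}∑_{(γ,δ)∈T} b_{α,β,γ,δ} z_1^α (log z_1)^β z_2^γ (log z_2)^δ both converge absolutely on a nonempty open subset of ℂ× × ℂ× and converge to the same values there, then a_{α,β,γ,δ} = b_{α,β,γ,δ} for all indices. -/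
open Complex

/-- A subset `S ⊆ ℂ × ℕ` is a unique expansion set (with respect to a branch `L` of
the logarithm) if any absolutely convergent series `∑_{(α,β)∈S} c_{α,β} z^α (log z)^β`
converging to `0` on a nonempty open subset of `ℂ \ {0}` has all coefficients zero. -/
def IsUniqueExpansionSet (L : ℂ → ℂ) (S : Set (ℂ × ℕ)) : Prop :=
  ∀ (c : S → ℂ) (U : Set ℂ), IsOpen U → U.Nonempty → (0 : ℂ) ∉ U →
    (∀ z ∈ U, Summable (fun p : S =>
      ‖c p * Complex.exp ((p : ℂ × ℕ).1 * L z) * (L z) ^ (p : ℂ × ℕ).2‖)) →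
    (∀ z ∈ U, (∑' p : S, c p * Complex.exp ((p : ℂ × ℕ).1 * L z) * (L z) ^ (p : ℂ × ℕ).2) = 0) →
    ∀ p, c p = 0

open Topology in
private lemma exists_ne_one_mem {U : Set ℂ} (hU : IsOpen U) {w : ℂ} (hw : w ∈ U) :
    ∃ w' ∈ U, w' ≠ 1 := by
  rcases eq_or_ne w 1 with h | h
  · have h1 : U ∈ 𝓝[≠] (1 : ℂ) :=
      mem_nhdsWithin_of_mem_nhds (h ▸ hU.mem_nhds hw)
    have h2 : U ∩ {(1 : ℂ)}ᶜ ∈ 𝓝[≠] (1 : ℂ) :=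
      Filter.inter_mem h1 self_mem_nhdsWithin
    obtain ⟨w', hw'⟩ := Filter.nonempty_of_mem h2
    exact ⟨w', hw'.1, hw'.2⟩
  · exact ⟨w, hw, h⟩

/-- Auxiliary basis function. -/
private noncomputable def Fa (L : ℂ → ℂ) (p : ℂ × ℕ) (z : ℂ) : ℂ :=
  Complex.exp (p.1 * L z) * (L z) ^ p.2


/-- If `S` and `T` are unique expansion sets and two double series
`∑_{(α,β)∈S, (γ,δ)∈T} a_{α,β,γ,δ} z₁^α (log z₁)^β z₂^γ (log z₂)^δ` (and the same with
coefficients `b`) both converge absolutely on a nonempty open subset of `ℂ× × ℂ×`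
and converge to the same values there, then `a = b`. -/

theorem stmt2 (L : ℂ → ℂ) (hL : ∀ z : ℂ, z ≠ 0 → Complex.exp (L z) = z)
    (hLc : ContinuousOn L {z : ℂ | z ≠ 0})
    (S T : Set (ℂ × ℕ))
    (hS : IsUniqueExpansionSet L S) (hT : IsUniqueExpansionSet L T)
    (a b : S → T → ℂ)
    (U : Set (ℂ × ℂ)) (hU : IsOpen U) (hUne : U.Nonempty)
    (hU0 : ∀ z ∈ U, z.1 ≠ 0 ∧ z.2 ≠ 0)
    (haabs : ∀ z ∈ U, Summable (fun p : S × T =>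
      ‖a p.1 p.2 * Complex.exp ((p.1 : ℂ × ℕ).1 * L z.1) * (L z.1) ^ (p.1 : ℂ × ℕ).2 *
        Complex.exp ((p.2 : ℂ × ℕ).1 * L z.2) * (L z.2) ^ (p.2 : ℂ × ℕ).2‖))
    (hbabs : ∀ z ∈ U, Summable (fun p : S × T =>
      ‖b p.1 p.2 * Complex.exp ((p.1 : ℂ × ℕ).1 * L z.1) * (L z.1) ^ (p.1 : ℂ × ℕ).2 *
        Complex.exp ((p.2 : ℂ × ℕ).1 * L z.2) * (L z.2) ^ (p.2 : ℂ × ℕ).2‖))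
    (heq : ∀ z ∈ U,
      (∑' p : S × T,
        a p.1 p.2 * Complex.exp ((p.1 : ℂ × ℕ).1 * L z.1) * (L z.1) ^ (p.1 : ℂ × ℕ).2 *
          Complex.exp ((p.2 : ℂ × ℕ).1 * L z.2) * (L z.2) ^ (p.2 : ℂ × ℕ).2) =
      (∑' p : S × T,
        b p.1 p.2 * Complex.exp ((p.1 : ℂ × ℕ).1 * L z.1) * (L z.1) ^ (p.1 : ℂ × ℕ).2 *
          Complex.exp ((p.2 : ℂ × ℕ).1 * L z.2) * (L z.2) ^ (p.2 : ℂ × ℕ).2)) :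
    ∀ p q, a p q = b p q := by
  obtain ⟨⟨w₁, w₂⟩, hw⟩ := hUne
  obtain ⟨U₁, U₂, hU₁o, hU₂o, hw₁, hw₂, hsub⟩ := isOpen_prod_iff.mp hU w₁ w₂ hw
  have hmem : ∀ z₁ ∈ U₁, ∀ z₂ ∈ U₂, (z₁, z₂) ∈ U := fun z₁ h₁ z₂ h₂ => hsub ⟨h₁, h₂⟩
  have h0U₁ : (0 : ℂ) ∉ U₁ := fun h => (hU0 (0, w₂) (hmem 0 h w₂ hw₂)).1 rfl
  have h0U₂ : (0 : ℂ) ∉ U₂ := fun h => (hU0 (w₁, 0) (hmem w₁ hw₁ 0 h)).2 rfl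
  set c : S → T → ℂ := fun p q => a p q - b p q with hc
  -- rewrite of the generic term
  have hterm : ∀ (z₁ z₂ : ℂ) (p : S × T),
      c p.1 p.2 * Fa L (↑p.1) z₁ * Fa L (↑p.2) z₂ =
      (a p.1 p.2 * Complex.exp ((p.1 : ℂ × ℕ).1 * L z₁) * (L z₁) ^ (p.1 : ℂ × ℕ).2 *
        Complex.exp ((p.2 : ℂ × ℕ).1 * L z₂) * (L z₂) ^ (p.2 : ℂ × ℕ).2) -
      (b p.1 p.2 * Complex.exp ((p.1 : ℂ × ℕ).1 * L z₁) * (L z₁) ^ (p.1 : ℂ × ℕ).2 *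
        Complex.exp ((p.2 : ℂ × ℕ).1 * L z₂) * (L z₂) ^ (p.2 : ℂ × ℕ).2) := by
    intro z₁ z₂ p
    simp only [hc, Fa]
    ring
  -- absolute summability of c-series
  have habs : ∀ z₁ ∈ U₁, ∀ z₂ ∈ U₂, Summable (fun p : S × T =>
      ‖c p.1 p.2 * Fa L (↑p.1) z₁ * Fa L (↑p.2) z₂‖) := by
    intro z₁ h₁ z₂ h₂
    have ha := haabs (z₁, z₂) (hmem _ h₁ _ h₂)
    have hb := hbabs (z₁, z₂) (hmem _ h₁ _ h₂)
    refine Summable.of_nonneg_of_le (fun p => norm_nonneg _) (fun p => ?_) (ha.add hb)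
    rw [hterm z₁ z₂ p]
    exact norm_sub_le _ _
  -- the c-series sums to zero on the rectangle
  have heqc : ∀ z₁ ∈ U₁, ∀ z₂ ∈ U₂,
      (∑' p : S × T, c p.1 p.2 * Fa L (↑p.1) z₁ * Fa L (↑p.2) z₂) = 0 := by
    intro z₁ h₁ z₂ h₂
    have hm := hmem _ h₁ _ h₂
    have hA := (haabs (z₁, z₂) hm).of_norm
    have hB := (hbabs (z₁, z₂) hm).of_norm
    calc (∑' p : S × T, c p.1 p.2 * Fa L (↑p.1) z₁ * Fa L (↑p.2) z₂)
        = ∑' p : S × T,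
            ((a p.1 p.2 * Complex.exp ((p.1 : ℂ × ℕ).1 * L z₁) * (L z₁) ^ (p.1 : ℂ × ℕ).2 *
              Complex.exp ((p.2 : ℂ × ℕ).1 * L z₂) * (L z₂) ^ (p.2 : ℂ × ℕ).2) -
            (b p.1 p.2 * Complex.exp ((p.1 : ℂ × ℕ).1 * L z₁) * (L z₁) ^ (p.1 : ℂ × ℕ).2 *
              Complex.exp ((p.2 : ℂ × ℕ).1 * L z₂) * (L z₂) ^ (p.2 : ℂ × ℕ).2)) :=
          tsum_congr (hterm z₁ z₂)
      _ = 0 := by rw [Summable.tsum_sub hA hB, heq (z₁, z₂) hm, sub_self]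
  -- choose a point w₁' ∈ U₁ with w₁' ≠ 1, so L w₁' ≠ 0
  obtain ⟨w₁', hw₁', hw₁'1⟩ := exists_ne_one_mem hU₁o hw₁
  have hz0 : w₁' ≠ 0 := (hU0 (w₁', w₂) (hmem _ hw₁' _ hw₂)).1
  have hLne : L w₁' ≠ 0 := fun h => hw₁'1 (by rw [← hL w₁' hz0, h, Complex.exp_zero])
  have hFne : ∀ p : ℂ × ℕ, Fa L p w₁' ≠ 0 := fun p =>
    mul_ne_zero (Complex.exp_ne_zero _) (pow_ne_zero _ hLne)
  -- fiberwise absolute summability in the T variable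
  have hfib : ∀ z₂ ∈ U₂, ∀ p : S, Summable (fun q : T => ‖c p q * Fa L (↑q) z₂‖) := by
    intro z₂ h₂ p
    have h1 : Summable (fun q : T => ‖c p q * Fa L (↑p) w₁' * Fa L (↑q) z₂‖) :=
      (habs w₁' hw₁' z₂ h₂).prod_factor p
    refine (h1.mul_right (‖Fa L (↑p) w₁'‖⁻¹)).congr fun q => ?_
    have hne : ‖Fa L (↑p) w₁'‖ ≠ 0 := norm_ne_zero_iff.mpr (hFne _)
    rw [norm_mul, norm_mul, norm_mul, mul_right_comm, mul_inv_cancel_right₀ hne]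
  -- Step 1 : apply hS for each fixed z₂
  have hd0 : ∀ z₂ ∈ U₂, ∀ p : S, (∑' q : T, c p q * Fa L (↑q) z₂) = 0 := by
    intro z₂ h₂
    refine hS (fun p => ∑' q : T, c p q * Fa L (↑q) z₂) U₁ hU₁o ⟨w₁, hw₁⟩ h0U₁ ?_ ?_
    · intro z₁ h₁
      have hnn : 0 ≤ fun p : S × T => ‖c p.1 p.2 * Fa L (↑p.1) z₁ * Fa L (↑p.2) z₂‖ :=
        fun p => norm_nonneg _
      have hmaj : Summable (fun p : S =>
          ∑' q : T, ‖c p q * Fa L (↑p) z₁ * Fa L (↑q) z₂‖) :=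
        ((summable_prod_of_nonneg hnn).mp (habs z₁ h₁ z₂ h₂)).2
      refine Summable.of_nonneg_of_le (fun p => norm_nonneg _) (fun p => ?_) hmaj
      have h1 : ‖(∑' q : T, c p q * Fa L (↑q) z₂) * Complex.exp ((p : ℂ × ℕ).1 * L z₁) *
          (L z₁) ^ (p : ℂ × ℕ).2‖
          = ‖∑' q : T, c p q * Fa L (↑q) z₂‖ * ‖Fa L (↑p) z₁‖ := by
        rw [mul_assoc, norm_mul]
        rfl
      rw [h1]
      have h2 : ‖∑' q : T, c p q * Fa L (↑q) z₂‖ ≤ ∑' q : T, ‖c p q * Fa L (↑q) z₂‖ :=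
        norm_tsum_le_tsum_norm (hfib z₂ h₂ p)
      calc ‖∑' q : T, c p q * Fa L (↑q) z₂‖ * ‖Fa L (↑p) z₁‖
          ≤ (∑' q : T, ‖c p q * Fa L (↑q) z₂‖) * ‖Fa L (↑p) z₁‖ :=
            mul_le_mul_of_nonneg_right h2 (norm_nonneg _)
        _ = ∑' q : T, ‖c p q * Fa L (↑p) z₁ * Fa L (↑q) z₂‖ := by
            rw [← tsum_mul_right]
            refine tsum_congr fun q => ?_
            rw [norm_mul, norm_mul, norm_mul]
            ring
    · intro z₁ h₁
      have hsum : Summable (fun p : S × T => c p.1 p.2 * Fa L (↑p.1) z₁ * Fa L (↑p.2) z₂) :=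
        (habs z₁ h₁ z₂ h₂).of_norm
      have hfib' : ∀ p : S, Summable (fun q : T => c p q * Fa L (↑p) z₁ * Fa L (↑q) z₂) :=
        fun p => hsum.prod_factor p
      calc (∑' p : S, (∑' q : T, c p q * Fa L (↑q) z₂) *
              Complex.exp ((p : ℂ × ℕ).1 * L z₁) * (L z₁) ^ (p : ℂ × ℕ).2)
          = ∑' p : S, ∑' q : T, c p q * Fa L (↑p) z₁ * Fa L (↑q) z₂ := by
            refine tsum_congr fun p => ?_
            rw [mul_assoc, ← tsum_mul_right]
            refine tsum_congr fun q => ?_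
            show c p q * Fa L (↑q) z₂ * Fa L (↑p) z₁ = _
            ring
        _ = ∑' p : S × T, c p.1 p.2 * Fa L (↑p.1) z₁ * Fa L (↑p.2) z₂ :=
            (Summable.tsum_prod' hsum hfib').symm
        _ = 0 := heqc z₁ h₁ z₂ h₂
  -- Step 2 : apply hT
  intro p q
  have h0 : ∀ qq : T, c p qq = 0 := by
    refine hT (fun qq => c p qq) U₂ hU₂o ⟨w₂, hw₂⟩ h0U₂ ?_ ?_
    · intro z₂ h₂
      refine (hfib z₂ h₂ p).congr fun qq => ?_
      rw [mul_assoc]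
      rfl
    · intro z₂ h₂
      have := hd0 z₂ h₂ p
      calc (∑' qq : T, c p qq * Complex.exp ((qq : ℂ × ℕ).1 * L z₂) *
              (L z₂) ^ (qq : ℂ × ℕ).2)
          = ∑' qq : T, c p qq * Fa L (↑qq) z₂ := tsum_congr fun qq => by
            rw [mul_assoc]; rfl
        _ = 0 := this
  have := h0 q
  simp only [hc] at this
  exact sub_eq_zero.mp this
end

section
/- Consider the formal delta function identity: for formal variables x_0, x_1, x_2, x_0^{−1} δ((x_1 − x_2)/x_0) − x_0^{−1} δ((−x_2 + x_1)/x_0) = x_1^{−1} δ((x_2 + x_0)/x_1), where δ(x) = ∑_{n∈ℤ} x^n and binomial expressions (x ± y)^n for n ∈ ℤ are expanded in nonnegative powers of the second variable. -/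
/-!
All three series are supported on `a + b + c = -1`. If `a < 0`, then `n = -a - 1 ≥ 0` and both
expansions of `(x₁ - x₂)ⁿ` are the same polynomial, while `x₁⁻¹ δ((x₂ + x₀)/x₁)` has no negative
powers of `x₀`. If `a ≥ 0`, upper negation `C(-m - 1, k) = (-1)ᵏ C(m + k, m)` turns each
coefficient into an ordinary binomial coefficient; on each monomial at most one of the two terms
on the left survives, and it matches the right-hand side by the symmetry of `C(m, k)`.
-/

/-- The generalized binomial coefficient `C(n, k) = n(n-1)⋯(n-k+1)/k!` for `n ∈ ℤ`,
valued in `ℂ`. -/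
noncomputable def cbinom (n : ℤ) (k : ℕ) : ℂ :=
  (∏ i ∈ Finset.range k, ((n : ℂ) - (i : ℂ))) / (Nat.factorial k : ℂ)

lemma cbinom_eq_choose (n : ℤ) (k : ℕ) : cbinom n k = Ring.choose (n : ℂ) k := by
  rw [Ring.choose_eq_smul, ← Polynomial.aeval_eq_smeval, Polynomial.aeval_def,
    ← Polynomial.eval_map, descPochhammer_map, descPochhammer_eval_eq_prod_range, smul_eq_mul,
    cbinom, inv_mul_eq_div]

lemma cbinom_natCast (m k : ℕ) : cbinom m k = m.choose k := by
  rw [cbinom_eq_choose, Int.cast_natCast, Ring.choose_natCast]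

lemma cbinom_natCast_of_lt {m k : ℕ} (h : m < k) : cbinom m k = 0 := by
  rw [cbinom_natCast, Nat.choose_eq_zero_of_lt h, Nat.cast_zero]

lemma cbinom_neg_natCast_sub_one (m k : ℕ) :
    cbinom (-m - 1) k = (-1) ^ k * (m + k).choose m := by
  rw [cbinom_eq_choose, show ((-m - 1 : ℤ) : ℂ) = -((m + 1 : ℕ) : ℂ) by push_cast; ring,
    Ring.choose_neg, Units.smul_def,
    show ((m + 1 : ℕ) : ℂ) + k - 1 = ((m + k : ℕ) : ℂ) by push_cast; ring,
    Ring.choose_natCast, Nat.choose_symm_add]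
  simp

lemma neg_one_pow_mul_self {R : Type*} [Monoid R] [HasDistribNeg R] (n : ℕ) :
    (-1 : R) ^ n * (-1) ^ n = 1 := by
  rw [← pow_add, ← two_mul, pow_mul, neg_one_sq, one_pow]

/- The coefficients of `x₀^a x₁^b x₂^c` in `x₀⁻¹ δ((x₁ − x₂)/x₀)`, `x₀⁻¹ δ((−x₂ + x₁)/x₀)` and
`x₁⁻¹ δ((x₂ + x₀)/x₁)`. -/
noncomputable def deltaSubCoeff (a b c : ℤ) : ℂ :=
  if 0 ≤ c ∧ b = (-a - 1) - c then cbinom (-a - 1) c.toNat * (-1 : ℂ) ^ c.toNat else 0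

noncomputable def deltaNegAddCoeff (a b c : ℤ) : ℂ :=
  if 0 ≤ b ∧ c = (-a - 1) - b then cbinom (-a - 1) b.toNat * (-1 : ℂ) ^ ((-a - 1) - b) else 0

noncomputable def deltaAddCoeff (a b c : ℤ) : ℂ :=
  if 0 ≤ a ∧ c = (-b - 1) - a then cbinom (-b - 1) a.toNat else 0

lemma deltaSubCoeff_eq_deltaNegAddCoeff (n : ℕ) (b c : ℤ) (h : b + c = n) :
    deltaSubCoeff (-n - 1) b c = deltaNegAddCoeff (-n - 1) b c := by
  rw [deltaSubCoeff, deltaNegAddCoeff, show -(-(n : ℤ) - 1) - 1 = n by ring]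
  rcases lt_or_ge c 0 with hc | hc
  · lift b to ℕ using (by omega)
    rw [if_neg (by omega), if_pos ⟨by omega, by omega⟩, Int.toNat_natCast,
      cbinom_natCast_of_lt (by omega), zero_mul]
  rcases lt_or_ge b 0 with hb | hb
  · lift c to ℕ using hc
    rw [if_pos ⟨by omega, by omega⟩, if_neg (by omega), Int.toNat_natCast,
      cbinom_natCast_of_lt (by omega), zero_mul]
  lift b to ℕ using hb
  lift c to ℕ using hc
  obtain rfl : n = b + c := by omega
  rw [if_pos ⟨by omega, by omega⟩, if_pos ⟨by omega, by omega⟩, Int.toNat_natCast,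
    Int.toNat_natCast, show ((b + c : ℕ) : ℤ) - b = c by omega, zpow_natCast, cbinom_natCast,
    cbinom_natCast, Nat.choose_symm_add]

lemma deltaSubCoeff_sub_deltaNegAddCoeff (a : ℕ) (b c : ℤ) (h : a + b + c = -1) :
    deltaSubCoeff a b c - deltaNegAddCoeff a b c = deltaAddCoeff a b c := by
  rw [deltaSubCoeff, deltaNegAddCoeff, deltaAddCoeff]
  rcases le_or_gt 0 c with hc | hc
  · lift c to ℕ using hc
    rw [if_pos ⟨by omega, by omega⟩, if_neg (by omega), if_pos ⟨by omega, by omega⟩,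
      Int.toNat_natCast, Int.toNat_natCast, cbinom_neg_natCast_sub_one,
      show -b - 1 = ((a + c : ℕ) : ℤ) by omega, cbinom_natCast, sub_zero, mul_comm, ← mul_assoc,
      neg_one_pow_mul_self, one_mul]
  rcases le_or_gt 0 b with hb | hb
  · lift b to ℕ using hb
    obtain rfl : c = -a - 1 - b := by omega
    rw [if_neg (by omega), if_pos ⟨by omega, by omega⟩, if_pos ⟨by omega, by omega⟩,
      Int.toNat_natCast, Int.toNat_natCast, cbinom_neg_natCast_sub_one,
      cbinom_neg_natCast_sub_one,
      show -(a : ℤ) - 1 - b = -((a + 1 + b : ℕ) : ℤ) by push_cast; ring, ← inv_zpow', inv_neg_one,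
      zpow_natCast, add_comm b a, Nat.choose_symm_add, pow_add, pow_add]
    linear_combination ((-1 : ℂ) ^ a * (a + b).choose b) * neg_one_pow_mul_self (R := ℂ) b
  obtain ⟨m, hm⟩ : ∃ m : ℕ, -b - 1 = m := ⟨(-b - 1).toNat, by omega⟩
  rw [if_neg (by omega), if_neg (by omega), if_pos ⟨by omega, by omega⟩, hm, Int.toNat_natCast,
    cbinom_natCast_of_lt (by omega), sub_zero]

/-- The formal delta-function identity
`x₀⁻¹ δ((x₁ − x₂)/x₀) − x₀⁻¹ δ((−x₂ + x₁)/x₀) = x₁⁻¹ δ((x₂ + x₀)/x₁)`,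
stated as an equality of the coefficients of `x₀^a x₁^b x₂^c` for all `a b c ∈ ℤ`,
where `(x₁ − x₂)^n` is expanded in nonnegative powers of `x₂`, `(−x₂ + x₁)^n` in
nonnegative powers of `x₁`, and `(x₂ + x₀)^n` in nonnegative powers of `x₀`. -/
theorem stmt8 (a b c : ℤ) :
    (if 0 ≤ c ∧ b = (-a - 1) - c then cbinom (-a - 1) c.toNat * (-1 : ℂ) ^ c.toNat else 0)
      - (if 0 ≤ b ∧ c = (-a - 1) - b then
          cbinom (-a - 1) b.toNat * (-1 : ℂ) ^ ((-a - 1) - b) else 0)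
      = (if 0 ≤ a ∧ c = (-b - 1) - a then cbinom (-b - 1) a.toNat else 0) := by
  change deltaSubCoeff a b c - deltaNegAddCoeff a b c = deltaAddCoeff a b c
  by_cases h : a + b + c = -1
  · rcases le_or_gt 0 a with ha | ha
    · lift a to ℕ using ha
      exact deltaSubCoeff_sub_deltaNegAddCoeff a b c h
    · obtain ⟨n, rfl⟩ : ∃ n : ℕ, a = -n - 1 := ⟨(-a - 1).toNat, by omega⟩
      rw [deltaSubCoeff_eq_deltaNegAddCoeff n b c (by omega), sub_self, deltaAddCoeff,
        if_neg (by omega)]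
  · rw [deltaSubCoeff, deltaNegAddCoeff, deltaAddCoeff, if_neg (by omega), if_neg (by omega),
      if_neg (by omega), sub_zero]
end

section
/- Let a_0(z),…,a_{n−1}(z) be holomorphic on the disc D_r(0). Then every formal series solution ψ(z) = ∑_{finite j} z^{s_j} (log z)^{m_j} h_j(z), with h_j formal power series, of the ODE (z d/dz)^n ψ + a_{n−1}(z)(z d/dz)^{n−1} ψ + ⋯ + a_0(z) ψ = 0 converges absolutely in the punctured disc 0 < |z| < r: each h_j converges on D_r(0). -/
/-- The operator `z d/dz` on coefficient families `c : ℂ → ℕ → ℂ`, where `c α β` is the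
coefficient of `z^α (log z)^β`. -/
noncomputable def thetaOp (c : ℂ → ℕ → ℂ) : ℂ → ℕ → ℂ :=
  fun α β => α * c α β + ((β : ℂ) + 1) * c α (β + 1)

/-- Multiplication of a coefficient family by a power series `a(z)`. -/
noncomputable def mulSeries (a : PowerSeries ℂ) (c : ℂ → ℕ → ℂ) : ℂ → ℕ → ℂ :=
  fun α β => ∑' p : ℕ, (PowerSeries.coeff p a) * c (α - (p : ℂ)) β

/-- The coefficient family of the formal expression `∑_j z^{s_j} (log z)^{m_j} h_j(z)`. -/
noncomputable def expCoeff (J : ℕ) (s : Fin J → ℂ) (m : Fin J → ℕ)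
    (h : Fin J → PowerSeries ℂ) : ℂ → ℕ → ℂ :=
  fun α β => ∑ j : Fin J, ∑' p : ℕ,
    if α = s j + (p : ℂ) ∧ β = m j then PowerSeries.coeff p (h j) else 0

/-!
Fix `j`, and let `s₀` be such that every exponent `s i` in the class `s j + ℤ` lies in
`s₀ + ℕ`. Write `D p β` for the coefficient of `z^(s₀+p) (log z)^β`; it vanishes for
`β > M := max m`. Comparing coefficients of `z^(s₀+p) (log z)^β` in the equation gives
`P(s₀+p) D p β = R`, where `P` is the indicial polynomial and `R` only involves coefficients
`D q β'` with `q ≤ p`, `β' ≥ β`, `(q, β') ≠ (p, β)`: those of higher log-degree come from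
`z d/dz` lowering the power of `log z`, those of lower `p` from the Cauchy products with the
`a_k`. Fix `‖z‖ < ρ < ρ₁ < r`, so that the coefficients of the `a_k` are `O(ρ₁^(-q))`. If the
earlier coefficients are bounded by `C ρ^(-q)`, then `|R| = O(p^(n-1)) C ρ^(-p)`, while
`|P(s₀+p)|` grows like `p^n`; so for `p ≥ N` the bound propagates to `D p β`, and choosing `C`
to cover `p < N` an induction on `p + (M - β)` gives `|D p β| ≤ C ρ^(-p)` for all `p, β`.
-/

open Finset

/-- On the coefficients of the powers `(log z)^β`, `d/d(log z)` acts by this shift, and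
`z d/dz` acts on `z^α (log z)^β` as `α + d/d(log z)`. -/
noncomputable def logShift : Module.End ℂ (ℕ → ℂ) where
  toFun f β := ((β : ℂ) + 1) * f (β + 1)
  map_add' f g := by ext β; simp [mul_add]
  map_smul' a f := by ext β; simp only [Pi.smul_apply, smul_eq_mul, RingHom.id_apply]; ring

lemma logShift_pow_apply (i : ℕ) (f : ℕ → ℂ) (β : ℕ) :
    (logShift ^ i) f β = (β + i).descFactorial i * f (β + i) := by
  induction i generalizing f β with
  | zero => simp
  | succ i ih =>
    rw [pow_succ, Module.End.mul_apply, ih]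
    simp only [logShift, LinearMap.coe_mk, AddHom.coe_mk, ← add_assoc,
      Nat.succ_descFactorial_succ]
    push_cast
    ring

lemma thetaOp_iterate_eq_pow (c : ℂ → ℕ → ℂ) (α : ℂ) (k : ℕ) :
    thetaOp^[k] c α = ((logShift + algebraMap ℂ _ α) ^ k) (c α) := by
  induction k with
  | zero => rfl
  | succ k ih =>
    ext β
    rw [Function.iterate_succ_apply', pow_succ', Module.End.mul_apply, ← ih]
    simp [thetaOp, logShift, add_comm]

lemma thetaOp_iterate_eq_zero {c : ℂ → ℕ → ℂ} {α : ℂ} (hc : c α = 0) (k : ℕ) :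
    thetaOp^[k] c α = 0 := by
  rw [thetaOp_iterate_eq_pow, hc, map_zero]

def thetaWeight (k i β : ℕ) : ℕ := k.choose i * (β + i).descFactorial i

lemma thetaWeight_le {k i β n M : ℕ} (hk : k ≤ n) (hi : i ≤ k) (hβ : β ≤ M) :
    thetaWeight k i β ≤ (2 * (M + n + 1)) ^ n := by
  rw [mul_pow]
  refine Nat.mul_le_mul ((k.choose_le_two_pow i).trans (Nat.pow_le_pow_right two_pos hk)) ?_
  calc (β + i).descFactorial i ≤ (β + i) ^ i := Nat.descFactorial_le_pow _ _
    _ ≤ (M + n + 1) ^ i := Nat.pow_le_pow_left (by omega) i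
    _ ≤ (M + n + 1) ^ n := Nat.pow_le_pow_right (by omega) (by omega)

lemma thetaOp_iterate_apply (c : ℂ → ℕ → ℂ) (k : ℕ) (α : ℂ) (β : ℕ) :
    thetaOp^[k] c α β =
      ∑ i ∈ range (k + 1), (thetaWeight k i β : ℂ) * α ^ (k - i) * c α (β + i) := by
  rw [thetaOp_iterate_eq_pow, (Algebra.commute_algebraMap_right α logShift).add_pow]
  simp only [LinearMap.sum_apply, Finset.sum_apply, mul_assoc, ← map_pow, ← map_natCast
    (algebraMap ℂ (Module.End ℂ (ℕ → ℂ))), ← map_mul, Module.End.mul_apply,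
    Module.algebraMap_end_apply, map_smul, Pi.smul_apply, logShift_pow_apply, smul_eq_mul]
  refine sum_congr rfl fun i _ => ?_
  push_cast [thetaWeight]
  ring

noncomputable def thetaTail (k : ℕ) (c : ℂ → ℕ → ℂ) (α : ℂ) (β : ℕ) : ℂ :=
  ∑ i ∈ range k, (thetaWeight k (i + 1) β : ℂ) * α ^ (k - (i + 1)) * c α (β + (i + 1))

lemma thetaOp_iterate_apply_eq_add (c : ℂ → ℕ → ℂ) (k : ℕ) (α : ℂ) (β : ℕ) :
    thetaOp^[k] c α β = α ^ k * c α β + thetaTail k c α β := by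
  rw [thetaOp_iterate_apply, sum_range_succ', thetaTail]
  simp [thetaWeight, add_comm]

lemma norm_natCast_mul_pow_mul_le {w j e : ℕ} {α v : ℂ} {Λ Y K : ℝ} (hw : (w : ℝ) ≤ Λ)
    (hY : 1 ≤ Y) (hα : ‖α‖ ≤ Y) (hj : j ≤ e) (hv : ‖v‖ ≤ K) :
    ‖(w : ℂ) * α ^ j * v‖ ≤ Λ * Y ^ e * K := by
  rw [norm_mul, norm_mul, norm_pow, Complex.norm_natCast]
  have hΛ : 0 ≤ Λ := (Nat.cast_nonneg w).trans hw
  have hpow : ‖α‖ ^ j ≤ Y ^ e :=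
    (pow_le_pow_left₀ (norm_nonneg α) hα j).trans (pow_le_pow_right₀ hY hj)
  gcongr

lemma norm_thetaTail_le {c : ℂ → ℕ → ℂ} {k e β : ℕ} {α : ℂ} {Λ Y K : ℝ} (hk : k ≤ e + 1)
    (hw : ∀ i < k, (thetaWeight k (i + 1) β : ℝ) ≤ Λ) (hY : 1 ≤ Y) (hα : ‖α‖ ≤ Y)
    (hc : ∀ i < k, ‖c α (β + (i + 1))‖ ≤ K) :
    ‖thetaTail k c α β‖ ≤ k * (Λ * Y ^ e * K) := by
  calc ‖thetaTail k c α β‖ ≤ ∑ _i ∈ range k, Λ * Y ^ e * K := by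
        refine norm_sum_le_of_le _ fun i hi => ?_
        rw [mem_range] at hi
        exact norm_natCast_mul_pow_mul_le (hw i hi) hY hα (by omega) (hc i hi)
    _ = k * (Λ * Y ^ e * K) := by simp

lemma norm_thetaOp_iterate_le {c : ℂ → ℕ → ℂ} {k e β : ℕ} {α : ℂ} {Λ Y K : ℝ} (hk : k ≤ e)
    (hw : ∀ i ≤ k, (thetaWeight k i β : ℝ) ≤ Λ) (hY : 1 ≤ Y) (hα : ‖α‖ ≤ Y)
    (hc : ∀ i ≤ k, ‖c α (β + i)‖ ≤ K) :
    ‖thetaOp^[k] c α β‖ ≤ (k + 1) * (Λ * Y ^ e * K) := by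
  calc ‖thetaOp^[k] c α β‖ ≤ ∑ _i ∈ range (k + 1), Λ * Y ^ e * K := by
        rw [thetaOp_iterate_apply]
        refine norm_sum_le_of_le _ fun i hi => ?_
        rw [mem_range] at hi
        exact norm_natCast_mul_pow_mul_le (hw i (by omega)) hY hα (by omega) (hc i (by omega))
    _ = (k + 1) * (Λ * Y ^ e * K) := by simp

lemma mulSeries_apply_eq_sum (a : PowerSeries ℂ) {c : ℂ → ℕ → ℂ} {α : ℂ} {p : ℕ}
    (hc : ∀ q : ℕ, p < q → c (α - q) = 0) (β : ℕ) :
    mulSeries a c α β = ∑ q ∈ range (p + 1), PowerSeries.coeff q a * c (α - q) β := by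
  refine tsum_eq_sum fun q hq => ?_
  rw [hc q (by simpa using hq), Pi.zero_apply, mul_zero]

lemma norm_sum_range_mul_le {f g : ℕ → ℂ} {A B ρ ρ₁ : ℝ} {p : ℕ} (hρ : 0 < ρ) (hρρ₁ : ρ < ρ₁)
    (hB : 0 ≤ B) (hf : ∀ q, ‖f q‖ ≤ A / ρ₁ ^ q) (hg : ∀ q < p, ‖g q‖ ≤ B / ρ ^ q) :
    ‖∑ q ∈ range p, f (q + 1) * g (p - (q + 1))‖ ≤ A * B * (ρ / (ρ₁ - ρ)) / ρ ^ p := by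
  have hρ₁ : 0 < ρ₁ := hρ.trans hρρ₁
  have hA : 0 ≤ A := by simpa using (norm_nonneg _).trans (hf 0)
  set x := ρ / ρ₁ with hx
  have hx0 : 0 ≤ x := by positivity
  have hx1 : x < 1 := (div_lt_one hρ₁).2 hρρ₁
  have hgeom : ∑ q ∈ range p, x ^ (q + 1) ≤ x / (1 - x) := by
    have := geom_sum_Ico_le_of_lt_one (m := 1) (n := p + 1) hx0 hx1
    simpa [sum_Ico_eq_sum_range, add_comm] using this
  calc ‖∑ q ∈ range p, f (q + 1) * g (p - (q + 1))‖
      ≤ ∑ q ∈ range p, A * B / ρ ^ p * x ^ (q + 1) := by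
        refine norm_sum_le_of_le _ fun q hq => ?_
        rw [mem_range] at hq
        have hsplit : ρ ^ p = ρ ^ (p - (q + 1)) * ρ ^ (q + 1) := by
          rw [← pow_add, Nat.sub_add_cancel hq]
        calc ‖f (q + 1) * g (p - (q + 1))‖ ≤ A / ρ₁ ^ (q + 1) * (B / ρ ^ (p - (q + 1))) := by
              rw [norm_mul]
              exact mul_le_mul (hf _) (hg _ (by omega)) (norm_nonneg _) (by positivity)
          _ = A * B / ρ ^ p * x ^ (q + 1) := by
              rw [hsplit, hx, div_pow]
              field_simp
    _ = A * B / ρ ^ p * ∑ q ∈ range p, x ^ (q + 1) := by rw [mul_sum]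
    _ ≤ A * B / ρ ^ p * (x / (1 - x)) := by gcongr
    _ = A * B * (ρ / (ρ₁ - ρ)) / ρ ^ p := by
        rw [hx, one_sub_div hρ₁.ne', div_div_div_cancel_right₀ hρ₁.ne']
        ring

lemma exists_forall_le_of_summable {u : ℕ → ℕ → ℝ} {n : ℕ} (hu : ∀ k < n, Summable (u k)) :
    ∃ A, ∀ k < n, ∀ q, u k q ≤ A := by
  obtain ⟨A, hA⟩ : BddAbove (⋃ k ∈ Set.Iio n, Set.range (u k)) :=
    (Set.finite_Iio n).bddAbove_biUnion.2 fun k hk =>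
      (hu k hk).tendsto_atTop_zero.bddAbove_range
  exact ⟨A, fun k hk q => hA (Set.mem_biUnion hk (Set.mem_range_self q))⟩

lemma summable_norm_mul_pow_of_norm_le {f : ℕ → ℂ} {C ρ x : ℝ} (hf : ∀ p, ‖f p‖ ≤ C / ρ ^ p)
    (hx0 : 0 ≤ x) (hxρ : x < ρ) : Summable fun p => ‖f p‖ * x ^ p := by
  have hρ : 0 < ρ := hx0.trans_lt hxρ
  refine Summable.of_nonneg_of_le (fun p => by positivity) (fun p => ?_)
    ((summable_geometric_of_lt_one (by positivity) ((div_lt_one hρ).2 hxρ)).mul_left C)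
  calc ‖f p‖ * x ^ p ≤ C / ρ ^ p * x ^ p := by gcongr; exact hf p
    _ = C * (x / ρ) ^ p := by rw [div_pow]; ring

lemma forall_norm_le_div_pow_of_step {D : ℕ → ℕ → ℂ} {M N : ℕ} {ρ C : ℝ} (hρ : 0 < ρ)
    (hC : 0 ≤ C) (hzero : ∀ p β, M < β → D p β = 0)
    (hinit : ∀ p < N, ∀ β ≤ M, ‖D p β‖ ≤ C / ρ ^ p)
    (hstep : ∀ p β, N ≤ p → β ≤ M →
      (∀ q β', q ≤ p → β ≤ β' → (q, β') ≠ (p, β) → ‖D q β'‖ ≤ C / ρ ^ q) →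
        ‖D p β‖ ≤ C / ρ ^ p)
    (p β : ℕ) : ‖D p β‖ ≤ C / ρ ^ p := by
  induction h : p + (M - β) using Nat.strong_induction_on generalizing p β with
  | _ t ih =>
  rcases lt_or_ge M β with hβ | hβ
  · rw [hzero p β hβ, norm_zero]
    positivity
  rcases lt_or_ge p N with hp | hp
  · exact hinit p hp β hβ
  refine hstep p β hp hβ fun q β' hq hβ' hne => ?_
  rcases lt_or_ge M β' with hβ' | hβ'
  · rw [hzero q β' hβ', norm_zero]
    positivity
  have : q ≠ p ∨ β' ≠ β := by
    contrapose! hne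
    rw [hne.1, hne.2]
  exact ih _ (by omega) q β' rfl

section Recurrence

variable {n : ℕ} {a : ℕ → PowerSeries ℂ} {c : ℂ → ℕ → ℂ} {s₀ : ℂ}

noncomputable def indicial (n : ℕ) (a : ℕ → PowerSeries ℂ) (α : ℂ) : ℂ :=
  α ^ n + ∑ k ∈ range n, PowerSeries.coeff 0 (a k) * α ^ k

lemma le_norm_indicial (hn : 0 < n) {w : ℂ} (hw : 1 ≤ ‖w‖) :
    (‖w‖ - ∑ k ∈ range n, ‖PowerSeries.coeff 0 (a k)‖) * ‖w‖ ^ (n - 1) ≤ ‖indicial n a w‖ := by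
  have hlow : ‖∑ k ∈ range n, PowerSeries.coeff 0 (a k) * w ^ k‖
      ≤ (∑ k ∈ range n, ‖PowerSeries.coeff 0 (a k)‖) * ‖w‖ ^ (n - 1) := by
    rw [sum_mul]
    refine norm_sum_le_of_le _ fun k hk => ?_
    rw [norm_mul, norm_pow]
    exact mul_le_mul_of_nonneg_left
      (pow_le_pow_right₀ hw (Nat.le_sub_one_of_lt (mem_range.1 hk))) (norm_nonneg _)
  have hlead : ‖w ^ n‖ = ‖w‖ * ‖w‖ ^ (n - 1) := by
    rw [norm_pow, ← pow_succ', Nat.sub_add_cancel hn]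
  have := norm_sub_le (indicial n a w) (∑ k ∈ range n, PowerSeries.coeff 0 (a k) * w ^ k)
  rw [indicial, add_sub_cancel_right, hlead] at this
  rw [indicial]
  linarith

lemma exists_lt_norm_indicial (hn : 0 < n) (a : ℕ → PowerSeries ℂ) (s₀ : ℂ) (T : ℝ) :
    ∃ N : ℕ, ∀ p ≥ N, T * (‖s₀‖ + p + 1) ^ (n - 1) < ‖indicial n a (s₀ + p)‖ := by
  set B := ∑ k ∈ range n, ‖PowerSeries.coeff 0 (a k)‖
  have hB : 0 ≤ B := sum_nonneg fun _ _ => norm_nonneg _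
  obtain ⟨N, hN⟩ := exists_nat_gt (3 * ‖s₀‖ + 1 + B + |T| * 2 ^ (n - 1))
  refine ⟨N, fun p hp => ?_⟩
  have hpN : (N : ℝ) ≤ p := by exact_mod_cast hp
  have hw : (p : ℝ) - ‖s₀‖ ≤ ‖s₀ + p‖ := by
    simpa using norm_sub_le_norm_add (p : ℂ) s₀ |>.trans_eq (by rw [add_comm])
  have hT : 0 ≤ |T| * 2 ^ (n - 1) := by positivity
  have hs₀ := norm_nonneg s₀
  calc T * (‖s₀‖ + p + 1) ^ (n - 1) ≤ |T| * (2 * ‖s₀ + p‖) ^ (n - 1) := by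
        gcongr
        · exact le_abs_self T
        · linarith
    _ = |T| * 2 ^ (n - 1) * ‖s₀ + p‖ ^ (n - 1) := by ring
    _ < (‖s₀ + p‖ - B) * ‖s₀ + p‖ ^ (n - 1) := by
        gcongr
        · have : 0 < ‖s₀ + p‖ := by linarith
          positivity
        · linarith
    _ ≤ ‖indicial n a (s₀ + p)‖ := le_norm_indicial hn (by linarith)

lemma indicial_mul_eq (hbelow : ∀ p q : ℕ, p < q → c (s₀ + p - q) = 0)
    (hODE : thetaOp^[n] c + ∑ k ∈ range n, mulSeries (a k) (thetaOp^[k] c) = 0) (p β : ℕ) :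
    indicial n a (s₀ + p) * c (s₀ + p) β =
      -(thetaTail n c (s₀ + p) β
        + ∑ k ∈ range n, PowerSeries.coeff 0 (a k) * thetaTail k c (s₀ + p) β
        + ∑ k ∈ range n, ∑ q ∈ range p,
            PowerSeries.coeff (q + 1) (a k) * thetaOp^[k] c (s₀ + ↑(p - (q + 1))) β) := by
  have hk : ∀ k, mulSeries (a k) (thetaOp^[k] c) (s₀ + p) β =
      PowerSeries.coeff 0 (a k) * ((s₀ + p) ^ k * c (s₀ + p) β + thetaTail k c (s₀ + p) β)
      + ∑ q ∈ range p,
          PowerSeries.coeff (q + 1) (a k) * thetaOp^[k] c (s₀ + ↑(p - (q + 1))) β := by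
    intro k
    rw [mulSeries_apply_eq_sum _ (fun q hq => thetaOp_iterate_eq_zero (hbelow p q hq) k),
      sum_range_succ', add_comm, Nat.cast_zero, sub_zero, thetaOp_iterate_apply_eq_add]
    refine congrArg _ (sum_congr rfl fun q hq => ?_)
    rw [Nat.cast_sub (mem_range.1 hq), add_sub_assoc]
  have h := congrFun (congrFun hODE (s₀ + p)) β
  simp only [Pi.add_apply, Finset.sum_apply, Pi.zero_apply, hk, mul_add, sum_add_distrib] at h
  rw [thetaOp_iterate_apply_eq_add] at h
  simp only [indicial, add_mul, sum_mul, mul_assoc]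
  linear_combination h

lemma norm_indicial_mul_le {A Λ ρ ρ₁ C : ℝ} {p β : ℕ}
    (hbelow : ∀ p q : ℕ, p < q → c (s₀ + p - q) = 0)
    (hODE : thetaOp^[n] c + ∑ k ∈ range n, mulSeries (a k) (thetaOp^[k] c) = 0)
    (hρ : 0 < ρ) (hρρ₁ : ρ < ρ₁) (hA : ∀ k < n, ∀ q, ‖PowerSeries.coeff q (a k)‖ ≤ A / ρ₁ ^ q)
    (hΛ : ∀ k ≤ n, ∀ i ≤ k, (thetaWeight k i β : ℝ) ≤ Λ) (hC : 0 ≤ C)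
    (hearlier : ∀ q β', q ≤ p → β ≤ β' → (q, β') ≠ (p, β) → ‖c (s₀ + q) β'‖ ≤ C / ρ ^ q) :
    ‖indicial n a (s₀ + p)‖ * ‖c (s₀ + p) β‖ ≤
      n * Λ * (1 + n * A + n * A * (ρ / (ρ₁ - ρ))) * (‖s₀‖ + p + 1) ^ (n - 1) * (C / ρ ^ p) := by
  set Y := ‖s₀‖ + p + 1
  have hY : 1 ≤ Y := le_add_of_nonneg_left (by positivity)
  have hαY : ∀ q ≤ p, ‖s₀ + q‖ ≤ Y := fun q hq => by
    have : (q : ℝ) ≤ p := by exact_mod_cast hq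
    have := norm_add_le s₀ (q : ℂ)
    rw [Complex.norm_natCast] at this
    linarith
  have hΛ0 : 0 ≤ Λ := (Nat.cast_nonneg _).trans (hΛ 0 (Nat.zero_le n) 0 le_rfl)
  have hhigher : ∀ i, ‖c (s₀ + p) (β + (i + 1))‖ ≤ C / ρ ^ p := fun i =>
    hearlier p _ le_rfl (by omega) (by simp)
  have htail : ∀ k ≤ n, ‖thetaTail k c (s₀ + p) β‖ ≤ n * (Λ * Y ^ (n - 1) * (C / ρ ^ p)) :=
    fun k hk => (norm_thetaTail_le (e := n - 1) (by omega) (fun i hi => hΛ k hk (i + 1) hi) hY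
      (hαY p le_rfl) fun i _ => hhigher i).trans (by gcongr)
  have h₁ := htail n le_rfl
  have h₂ : ‖∑ k ∈ range n, PowerSeries.coeff 0 (a k) * thetaTail k c (s₀ + p) β‖ ≤
      n * (A * (n * (Λ * Y ^ (n - 1) * (C / ρ ^ p)))) := by
    calc _ ≤ ∑ _k ∈ range n, A * (n * (Λ * Y ^ (n - 1) * (C / ρ ^ p))) := by
          refine norm_sum_le_of_le _ fun k hk => ?_
          rw [mem_range] at hk
          have hk0 : ‖PowerSeries.coeff 0 (a k)‖ ≤ A := by simpa using hA k hk 0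
          rw [norm_mul]
          exact mul_le_mul hk0 (htail k hk.le) (norm_nonneg _) ((norm_nonneg _).trans hk0)
      _ = _ := by simp
  have h₃ : ‖∑ k ∈ range n, ∑ q ∈ range p,
      PowerSeries.coeff (q + 1) (a k) * thetaOp^[k] c (s₀ + ↑(p - (q + 1))) β‖ ≤
      n * (A * (n * Λ * Y ^ (n - 1) * C) * (ρ / (ρ₁ - ρ)) / ρ ^ p) := by
    calc _ ≤ ∑ _k ∈ range n, A * (n * Λ * Y ^ (n - 1) * C) * (ρ / (ρ₁ - ρ)) / ρ ^ p := by
          refine norm_sum_le_of_le _ fun k hk => ?_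
          rw [mem_range] at hk
          refine norm_sum_range_mul_le (f := fun q => PowerSeries.coeff q (a k))
            (g := fun q => thetaOp^[k] c (s₀ + q) β) hρ hρρ₁
            (by positivity) (hA k hk) fun q hq => ?_
          calc ‖thetaOp^[k] c (s₀ + q) β‖ ≤ (k + 1) * (Λ * Y ^ (n - 1) * (C / ρ ^ q)) :=
                norm_thetaOp_iterate_le (by omega) (hΛ k hk.le) hY (hαY q hq.le)
                  fun i _ => hearlier q _ hq.le (by omega) (by simp [hq.ne])
            _ ≤ n * (Λ * Y ^ (n - 1) * (C / ρ ^ q)) := by gcongr; exact_mod_cast hk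
            _ = n * Λ * Y ^ (n - 1) * C / ρ ^ q := by ring
      _ = _ := by simp
  rw [← norm_mul, indicial_mul_eq hbelow hODE, norm_neg]
  refine (norm_add₃_le).trans ((add_le_add (add_le_add h₁ h₂) h₃).trans_eq ?_)
  ring

theorem exists_norm_le_div_pow (hn : 0 < n) {ρ ρ₁ : ℝ} (hρ : 0 < ρ) (hρρ₁ : ρ < ρ₁)
    (ha : ∀ k < n, Summable fun q : ℕ => ‖PowerSeries.coeff q (a k)‖ * ρ₁ ^ q) {M : ℕ}
    (hhigh : ∀ α β, M < β → c α β = 0) (hbelow : ∀ p q : ℕ, p < q → c (s₀ + p - q) = 0)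
    (hODE : thetaOp^[n] c + ∑ k ∈ range n, mulSeries (a k) (thetaOp^[k] c) = 0) :
    ∃ C, ∀ p β : ℕ, ‖c (s₀ + p) β‖ ≤ C / ρ ^ p := by
  have hρ₁ : 0 < ρ₁ := hρ.trans hρρ₁
  obtain ⟨A, hA⟩ := exists_forall_le_of_summable
    (u := fun k q => ‖PowerSeries.coeff q (a k)‖ * ρ₁ ^ q) ha
  have hA0 : 0 ≤ A := (by positivity : (0 : ℝ) ≤ _).trans (hA 0 hn 0)
  have hA' : ∀ k < n, ∀ q, ‖PowerSeries.coeff q (a k)‖ ≤ A / ρ₁ ^ q := fun k hk q => by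
    rw [le_div_iff₀ (by positivity)]
    exact hA k hk q
  set V : ℝ := n * (2 * (M + n + 1) : ℝ) ^ n * (1 + n * A + n * A * (ρ / (ρ₁ - ρ)))
  have hV : 0 ≤ V := by have := sub_pos.2 hρρ₁; positivity
  obtain ⟨N, hN⟩ := exists_lt_norm_indicial hn a s₀ V
  set C := ∑ p ∈ range N, ∑ β ∈ range (M + 1), ‖c (s₀ + p) β‖ * ρ ^ p
  refine ⟨C, forall_norm_le_div_pow_of_step (N := N) hρ (by positivity) (fun p β hβ => hhigh _ β hβ)
    (fun p hp β hβ => ?_) (fun p β hp hβ hearlier => ?_)⟩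
  · rw [le_div_iff₀ (by positivity)]
    refine le_trans ?_ (single_le_sum (fun p _ => by positivity) (mem_range.2 hp))
    exact single_le_sum (f := fun β => ‖c (s₀ + p) β‖ * ρ ^ p) (fun β _ => by positivity)
      (mem_range.2 (Nat.lt_succ_of_le hβ))
  · have hΛ : ∀ k ≤ n, ∀ i ≤ k, (thetaWeight k i β : ℝ) ≤ (2 * (M + n + 1) : ℝ) ^ n :=
      fun k hk i hi => by exact_mod_cast thetaWeight_le hk hi hβ
    have hle := norm_indicial_mul_le hbelow hODE hρ hρρ₁ hA' hΛ (by positivity) hearlier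
    have hlt := hN p hp
    have hpos : 0 < ‖indicial n a (s₀ + p)‖ := lt_of_le_of_lt (by positivity) hlt
    refine le_of_mul_le_mul_left (hle.trans ?_) hpos
    exact mul_le_mul_of_nonneg_right hlt.le (by positivity)

end Recurrence

lemma exists_base_exponent {ι : Type*} [Finite ι] (s : ι → ℂ) (j : ι) :
    ∃ s₀ : ℂ, (∃ e : ℕ, s j = s₀ + e) ∧ ∀ i (w : ℤ), s i = s₀ + w → 0 ≤ w := by
  set W : Set ℤ := ⋃ i, {w | s i = s j + w}
  have hW : W.Finite := Set.finite_iUnion fun i => Set.Subsingleton.finite fun w₁ h₁ w₂ h₂ =>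
    Int.cast_injective (α := ℂ) (add_left_cancel (h₁.symm.trans h₂))
  obtain ⟨L, hL⟩ := hW.bddBelow
  have hL0 : L ≤ 0 := hL (Set.mem_iUnion.2 ⟨j, by simp⟩)
  refine ⟨s j + L, ⟨(-L).toNat, ?_⟩, fun i w hw => ?_⟩
  · rw [show (((-L).toNat : ℕ) : ℂ) = ((-L : ℤ) : ℂ) by
      rw [← Int.cast_natCast, Int.toNat_of_nonneg (by omega)]]
    push_cast
    ring
  · have hmem : L + w ∈ W := Set.mem_iUnion.2 ⟨i, show s i = s j + ↑(L + w) by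
      rw [hw]; push_cast; ring⟩
    have := hL hmem
    omega

section ExpCoeff

variable {J : ℕ} {s : Fin J → ℂ} {m : Fin J → ℕ} {h : Fin J → PowerSeries ℂ}

lemma expCoeff_eq_zero {α : ℂ} {β : ℕ} (H : ∀ j (p : ℕ), α = s j + p → β ≠ m j) :
    expCoeff J s m h α β = 0 :=
  sum_eq_zero fun j _ => (tsum_congr fun p => if_neg fun hp => H j p hp.1 hp.2).trans tsum_zero

lemma expCoeff_eq_zero_of_sup_lt {β : ℕ} (hβ : univ.sup m < β) (α : ℂ) :
    expCoeff J s m h α β = 0 :=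
  expCoeff_eq_zero fun j _ _ hj => (hj ▸ hβ).not_ge (le_sup (mem_univ j))

lemma expCoeff_sub_eq_zero {s₀ : ℂ} (hs₀ : ∀ j (w : ℤ), s j = s₀ + w → 0 ≤ w) {p q : ℕ}
    (hpq : p < q) : expCoeff J s m h (s₀ + p - q) = 0 := by
  funext β
  refine expCoeff_eq_zero fun j p' hj _ => ?_
  have := hs₀ j (p - q - p') (by push_cast; linear_combination -hj)
  omega

lemma expCoeff_add_natCast
    (hdistinct : ∀ j j' : Fin J, (∃ k : ℤ, s j - s j' = (k : ℂ)) → m j = m j' → j = j')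
    (j : Fin J) (p : ℕ) : expCoeff J s m h (s j + p) (m j) = PowerSeries.coeff p (h j) := by
  rw [expCoeff, sum_eq_single j]
  · rw [tsum_eq_single p fun p' hp' => if_neg fun h' => hp' ?_, if_pos ⟨rfl, rfl⟩]
    exact_mod_cast (add_left_cancel h'.1).symm
  · intro j' _ hj'
    refine (tsum_congr fun p' => if_neg ?_).trans tsum_zero
    rintro ⟨h₁, h₂⟩
    exact hj' (hdistinct j' j ⟨p - p', by push_cast; linear_combination -h₁⟩ h₂.symm)
  · simp

end ExpCoeff

theorem stmt13_general (n : ℕ) (hn : 0 < n) (r : ℝ)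
    (a : ℕ → PowerSeries ℂ)
    (ha : ∀ k < n, ∀ z : ℂ, ‖z‖ < r →
      Summable (fun p : ℕ => ‖PowerSeries.coeff p (a k)‖ * ‖z‖ ^ p))
    (J : ℕ) (s : Fin J → ℂ) (m : Fin J → ℕ) (h : Fin J → PowerSeries ℂ)
    (hdistinct : ∀ j j' : Fin J, (∃ k : ℤ, s j - s j' = (k : ℂ)) → m j = m j' → j = j')
    (hODE : (thetaOp^[n] (expCoeff J s m h)) +
      (∑ k ∈ Finset.range n, mulSeries (a k) (thetaOp^[k] (expCoeff J s m h))) = 0) :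
    ∀ j : Fin J, ∀ z : ℂ, ‖z‖ < r →
      Summable (fun p : ℕ => ‖PowerSeries.coeff p (h j)‖ * ‖z‖ ^ p) := by
  intro j z hz
  obtain ⟨s₀, ⟨e, he⟩, hs₀⟩ := exists_base_exponent s j
  set ρ₁ := (‖z‖ + r) / 2
  set ρ := (‖z‖ + ρ₁) / 2
  have hzρ : ‖z‖ < ρ := by simp only [ρ, ρ₁]; linarith
  have hρρ₁ : ρ < ρ₁ := by simp only [ρ, ρ₁]; linarith
  have hρ₁r : ρ₁ < r := by simp only [ρ₁]; linarith
  have hρ : 0 < ρ := (norm_nonneg z).trans_lt hzρ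
  have ha₁ : ∀ k < n, Summable fun q : ℕ => ‖PowerSeries.coeff q (a k)‖ * ρ₁ ^ q := fun k hk => by
    have hρ₁ : |ρ₁| = ρ₁ := abs_of_pos (hρ.trans hρρ₁)
    simpa [hρ₁] using ha k hk ρ₁ (by simpa [hρ₁] using hρ₁r)
  obtain ⟨C, hC⟩ := exists_norm_le_div_pow hn hρ hρρ₁ ha₁
    (fun α β hβ => expCoeff_eq_zero_of_sup_lt hβ α) (fun p q => expCoeff_sub_eq_zero hs₀) hODE
  refine summable_norm_mul_pow_of_norm_le (C := C / ρ ^ e) (fun p => ?_) (norm_nonneg z) hzρ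
  have hp := hC (e + p) (m j)
  rwa [Nat.cast_add, ← add_assoc, ← he, expCoeff_add_natCast hdistinct, pow_add, ← div_div] at hp

/-- Regular singular points: if `a_0(z), …, a_{n-1}(z)` are holomorphic on the disc
`|z| < r` (i.e. their Taylor series converge absolutely there), then every formal
series solution `ψ(z) = ∑_j z^{s_j} (log z)^{m_j} h_j(z)` of
`(z d/dz)^n ψ + a_{n-1}(z) (z d/dz)^{n-1} ψ + ⋯ + a_0(z) ψ = 0`
converges absolutely in `0 < |z| < r`: each `h_j` converges on the disc `|z| < r`. -/
theorem stmt13 (n : ℕ) (hn : 0 < n) (r : ℝ) (hr : 0 < r)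
    (a : ℕ → PowerSeries ℂ)
    (ha : ∀ k < n, ∀ z : ℂ, ‖z‖ < r →
      Summable (fun p : ℕ => ‖PowerSeries.coeff p (a k)‖ * ‖z‖ ^ p))
    (J : ℕ) (s : Fin J → ℂ) (m : Fin J → ℕ) (h : Fin J → PowerSeries ℂ)
    (hdistinct : ∀ j j' : Fin J, (∃ k : ℤ, s j - s j' = (k : ℂ)) → m j = m j' → j = j')
    (hODE : (thetaOp^[n] (expCoeff J s m h)) +
      (∑ k ∈ Finset.range n, mulSeries (a k) (thetaOp^[k] (expCoeff J s m h))) = 0) :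
    ∀ j : Fin J, ∀ z : ℂ, ‖z‖ < r →
      Summable (fun p : ℕ => ‖PowerSeries.coeff p (h j)‖ * ‖z‖ ^ p) :=
  stmt13_general n hn r a ha J s m h hdistinct hODE
end

section
/- Let Ω₁, Ω₂, Ω₁₂ be commuting-free linear operators on a finite-dimensional complex vector space U and α ∈ (1/t)ℤ with 0 ≤ α < 1. Consider the system on functions ψ: M² → U, where M² = {(z₁,z₂): z₁,z₂ ≠ 0, z₁ ≠ z₂}: ∂ψ/∂z₁ = ((z₂/z₁)^α (z₁−z₂)^{−1} Ω₁₂ + z₁^{−1} Ω₁) ψ, ∂ψ/∂z₂ = ((z₁/z₂)^{1−α} (z₂−z₁)^{−1} Ω₁₂ + z₂^{−1} Ω₂) ψ. After the substitution z₁ = η₁^t, z₂ = (η₁ η₂)^t, the system takes the form η_j ∂ψ/∂η_j = H_j(η₁,η₂) ψ (j = 1,2) with H_j holomorphic End(U)-valued functions near (η₁,η₂) = (0,0). -/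
/-!
Along `z₁ = η₁^t`, `z₂ = (η₁ η₂)^t` the Euler operators become `η₁ ∂_{η₁} = t (z₁ ∂_{z₁} + z₂ ∂_{z₂})`
and `η₂ ∂_{η₂} = t z₂ ∂_{z₂}`. In the first, the two `Ω₁₂`-terms have opposite residues along
`z₁ = z₂` and cancel, leaving `t (Ω₁ + Ω₂)`; in the second, `w^a z₁ / (z₂ - z₁) = η₂^a / (η₂^t - 1)`,
which is holomorphic for `|η₂| < 1`.
-/

open Metric

section EulerOperator

variable {E : Type*} [NormedAddCommGroup E] [NormedSpace ℂ E]

lemma exists_hasDerivAt_mul_pow (n : ℕ) (s c : ℂ) :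
    ∃ d, HasDerivAt (fun s : ℂ => (s * c) ^ n) d s ∧ s * d = n * (s * c) ^ n := by
  refine ⟨n * (s * c) ^ (n - 1) * c, by simpa using ((hasDerivAt_id s).mul_const c).fun_pow n, ?_⟩
  cases n with
  | zero => simp
  | succ n => simp only [Nat.add_sub_cancel, pow_succ]; push_cast; ring

lemma smul_deriv_comp_pow_left {ψ : ℂ × ℂ → E} {D : ℂ × ℂ →L[ℂ] E} (n : ℕ) (s c : ℂ)
    (hψ : HasFDerivAt ψ D (s ^ n, (s * c) ^ n)) :
    s • deriv (fun s : ℂ => ψ (s ^ n, (s * c) ^ n)) s =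
      (n : ℂ) • (s ^ n • D (1, 0) + (s * c) ^ n • D (0, 1)) := by
  obtain ⟨d₁, hd₁, hsd₁⟩ := exists_hasDerivAt_mul_pow n s 1
  obtain ⟨d₂, hd₂, hsd₂⟩ := exists_hasDerivAt_mul_pow n s c
  simp only [mul_one] at hd₁ hsd₁
  have hprod : (d₁, d₂) = d₁ • ((1 : ℂ), (0 : ℂ)) + d₂ • ((0 : ℂ), (1 : ℂ)) := by simp
  have hcomp : HasDerivAt (fun s : ℂ => ψ (s ^ n, (s * c) ^ n)) (D (d₁, d₂)) s :=
    hψ.comp_hasDerivAt s (hd₁.prodMk hd₂)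
  rw [hcomp.deriv, hprod, map_add, map_smul, map_smul,
    smul_add, smul_smul, smul_smul, hsd₁, hsd₂, smul_add, mul_smul, mul_smul]

lemma smul_deriv_comp_pow_right {ψ : ℂ × ℂ → E} {D : ℂ × ℂ →L[ℂ] E} (n : ℕ) (b s : ℂ)
    (hψ : HasFDerivAt ψ D (b ^ n, (b * s) ^ n)) :
    s • deriv (fun s : ℂ => ψ (b ^ n, (b * s) ^ n)) s = (n : ℂ) • (b * s) ^ n • D (0, 1) := by
  obtain ⟨d, hd, hsd⟩ := exists_hasDerivAt_mul_pow n s b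
  simp only [mul_comm _ b] at hd hsd
  have hprod : ((0 : ℂ), d) = d • ((0 : ℂ), (1 : ℂ)) := by simp
  have hcomp : HasDerivAt (fun s : ℂ => ψ (b ^ n, (b * s) ^ n)) (D (0, d)) s :=
    hψ.comp_hasDerivAt s ((hasDerivAt_const s (b ^ n)).prodMk hd)
  rw [hcomp.deriv, hprod, map_smul, smul_smul, hsd, mul_smul]

end EulerOperator

lemma differentiableOn_pow_div_pow_sub_one {t : ℕ} (ht : 0 < t) (a : ℕ) :
    DifferentiableOn ℂ (fun x : ℂ => x ^ a / (x ^ t - 1)) (ball 0 1) := by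
  intro x hx
  have hxt : ‖x ^ t‖ < 1 := by
    rw [norm_pow]
    exact pow_lt_one₀ (norm_nonneg x) (by simpa using hx) ht.ne'
  have hne : x ^ t - 1 ≠ 0 := sub_ne_zero.mpr fun h => by simp [h] at hxt
  have hdiff : DifferentiableAt ℂ (fun x : ℂ => x ^ a / (x ^ t - 1)) x := by
    fun_prop (disch := exact hne)
  exact hdiff.differentiableWithinAt

section KZResidues

variable {U : Type*} [AddCommGroup U] [Module ℂ U]

lemma kz_residues_cancel {z₁ z₂ : ℂ} (h₁ : z₁ ≠ 0) (h₂ : z₂ ≠ 0) (h₁₂ : z₁ ≠ z₂) (c : ℂ)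
    (x y₁ y₂ : U) :
    z₁ • ((c / (z₁ - z₂)) • x + z₁⁻¹ • y₁) +
      z₂ • ((c * (z₁ / z₂) / (z₂ - z₁)) • x + z₂⁻¹ • y₂) = y₁ + y₂ := by
  have h₁₂' : z₁ - z₂ ≠ 0 := sub_ne_zero.mpr h₁₂
  have h₂₁' : z₂ - z₁ ≠ 0 := sub_ne_zero.mpr h₁₂.symm
  match_scalars <;> field_simp
  ring

lemma kz_residue_ratio {z₁ z₂ : ℂ} (h₁ : z₁ ≠ 0) (h₂ : z₂ ≠ 0) (h₁₂ : z₁ ≠ z₂) (c : ℂ)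
    (x y : U) :
    z₂ • ((c * (z₁ / z₂) / (z₂ - z₁)) • x + z₂⁻¹ • y) = (c / (z₂ / z₁ - 1)) • x + y := by
  have h₂₁' : z₂ - z₁ ≠ 0 := sub_ne_zero.mpr h₁₂.symm
  have h' : z₂ / z₁ - 1 ≠ 0 := by
    rw [div_sub_one h₁]; exact div_ne_zero h₂₁' h₁
  match_scalars <;> field_simp

end KZResidues

theorem stmt15_general (U : Type*) [NormedAddCommGroup U] [NormedSpace ℂ U]
    (Ω₁ Ω₂ Ω₁₂ : U →L[ℂ] U)
    (t : ℕ) (ht : 0 < t) (a : ℕ)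
    (Ωs : Set (ℂ × ℂ)) (hopen : IsOpen Ωs)
    (hM : ∀ z ∈ Ωs, z.1 ≠ 0 ∧ z.2 ≠ 0 ∧ z.1 ≠ z.2)
    (ψ : ℂ × ℂ → U) (hψ : DifferentiableOn ℂ ψ Ωs)
    (w : ℂ × ℂ → ℂ)
    (hpde1 : ∀ z ∈ Ωs, fderiv ℂ ψ z (1, 0) =
      ((w z) ^ a / (z.1 - z.2)) • Ω₁₂ (ψ z) + (z.1)⁻¹ • Ω₁ (ψ z))
    (hpde2 : ∀ z ∈ Ωs, fderiv ℂ ψ z (0, 1) =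
      ((w z) ^ a * (z.1 / z.2) / (z.2 - z.1)) • Ω₁₂ (ψ z) + (z.2)⁻¹ • Ω₂ (ψ z)) :
    ∃ ε > (0 : ℝ), ∃ H₁ H₂ : ℂ × ℂ → (U →L[ℂ] U),
      DifferentiableOn ℂ H₁ (Metric.ball 0 ε) ∧
      DifferentiableOn ℂ H₂ (Metric.ball 0 ε) ∧
      ∀ η : ℂ × ℂ, η ∈ Metric.ball (0 : ℂ × ℂ) ε →
        (η.1 ^ t, (η.1 * η.2) ^ t) ∈ Ωs →
        w (η.1 ^ t, (η.1 * η.2) ^ t) = η.2 →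
        (η.1 • deriv (fun s : ℂ => ψ (s ^ t, (s * η.2) ^ t)) η.1 =
            H₁ η (ψ (η.1 ^ t, (η.1 * η.2) ^ t))) ∧
        (η.2 • deriv (fun s : ℂ => ψ (η.1 ^ t, (η.1 * s) ^ t)) η.2 =
            H₂ η (ψ (η.1 ^ t, (η.1 * η.2) ^ t))) := by
  refine ⟨1, one_pos, fun _ => (t : ℂ) • (Ω₁ + Ω₂),
    fun η => ((t : ℂ) * (η.2 ^ a / (η.2 ^ t - 1))) • Ω₁₂ + (t : ℂ) • Ω₂,
    differentiableOn_const _, ?_, ?_⟩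
  · have hsnd : Set.MapsTo Prod.snd (ball (0 : ℂ × ℂ) 1) (ball 0 1) := fun η hη => by
      simpa using (norm_snd_le η).trans_lt (by simpa using hη)
    exact ((((differentiableOn_pow_div_pow_sub_one ht a).comp differentiableOn_snd
      hsnd).const_mul _).smul_const Ω₁₂).add_const _
  · intro η _ hz hwz
    obtain ⟨hz₁, hz₂, hz₁₂⟩ := hM _ hz
    dsimp only at hz₁ hz₂ hz₁₂
    have hD := (hψ.differentiableAt (hopen.mem_nhds hz)).hasFDerivAt
    have hratio : (η.1 * η.2) ^ t / η.1 ^ t = η.2 ^ t := by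
      rw [mul_pow, mul_div_cancel_left₀ _ hz₁]
    constructor
    · rw [smul_deriv_comp_pow_left t η.1 η.2 hD, hpde1 _ hz, hpde2 _ hz,
        kz_residues_cancel hz₁ hz₂ hz₁₂]
      simp only [smul_add, add_apply, smul_apply]
    · rw [smul_deriv_comp_pow_right t η.1 η.2 hD, hpde2 _ hz, hwz,
        kz_residue_ratio hz₁ hz₂ hz₁₂, hratio]
      simp only [smul_add, mul_smul, add_apply, smul_apply]

/-- The `N = 2` twisted KZ system has a simple singularity: let `Ω₁, Ω₂, Ω₁₂` be linear
operators on a finite-dimensional complex space `U`, `α = a/t` with `0 ≤ α < 1`, and let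
`ψ` solve, on an open set `Ωs ⊆ M² = {(z₁,z₂) : z₁, z₂ ≠ 0, z₁ ≠ z₂}` (with `w` a branch
of `(z₂/z₁)^{1/t}` so that `(z₂/z₁)^α = w^a` and `(z₁/z₂)^{1-α} = w^a z₁/z₂`):
`∂ψ/∂z₁ = ((z₂/z₁)^α (z₁−z₂)⁻¹) Ω₁₂ ψ + z₁⁻¹ Ω₁ ψ`,
`∂ψ/∂z₂ = ((z₁/z₂)^{1−α} (z₂−z₁)⁻¹) Ω₁₂ ψ + z₂⁻¹ Ω₂ ψ`.
After the substitution `z₁ = η₁^t`, `z₂ = (η₁ η₂)^t` (along which `w = η₂`), the system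
takes the form `η_j ∂ψ/∂η_j = H_j(η₁,η₂) ψ` with `H₁, H₂` holomorphic near `(0,0)`. -/
theorem stmt15 (U : Type*) [NormedAddCommGroup U] [NormedSpace ℂ U]
    [FiniteDimensional ℂ U]
    (Ω₁ Ω₂ Ω₁₂ : U →L[ℂ] U)
    (t : ℕ) (ht : 0 < t) (a : ℕ) (ha : a < t)
    (Ωs : Set (ℂ × ℂ)) (hopen : IsOpen Ωs)
    (hM : ∀ z ∈ Ωs, z.1 ≠ 0 ∧ z.2 ≠ 0 ∧ z.1 ≠ z.2)
    (ψ : ℂ × ℂ → U) (hψ : DifferentiableOn ℂ ψ Ωs)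
    (w : ℂ × ℂ → ℂ) (hw : ∀ z ∈ Ωs, (w z) ^ t = z.2 / z.1)
    (hpde1 : ∀ z ∈ Ωs, fderiv ℂ ψ z (1, 0) =
      ((w z) ^ a / (z.1 - z.2)) • Ω₁₂ (ψ z) + (z.1)⁻¹ • Ω₁ (ψ z))
    (hpde2 : ∀ z ∈ Ωs, fderiv ℂ ψ z (0, 1) =
      ((w z) ^ a * (z.1 / z.2) / (z.2 - z.1)) • Ω₁₂ (ψ z) + (z.2)⁻¹ • Ω₂ (ψ z)) :
    ∃ ε > (0 : ℝ), ∃ H₁ H₂ : ℂ × ℂ → (U →L[ℂ] U),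
      DifferentiableOn ℂ H₁ (Metric.ball 0 ε) ∧
      DifferentiableOn ℂ H₂ (Metric.ball 0 ε) ∧
      ∀ η : ℂ × ℂ, η ∈ Metric.ball (0 : ℂ × ℂ) ε →
        (η.1 ^ t, (η.1 * η.2) ^ t) ∈ Ωs →
        w (η.1 ^ t, (η.1 * η.2) ^ t) = η.2 →
        (η.1 • deriv (fun s : ℂ => ψ (s ^ t, (s * η.2) ^ t)) η.1 =
            H₁ η (ψ (η.1 ^ t, (η.1 * η.2) ^ t))) ∧
        (η.2 • deriv (fun s : ℂ => ψ (η.1 ^ t, (η.1 * s) ^ t)) η.2 =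
            H₂ η (ψ (η.1 ^ t, (η.1 * η.2) ^ t))) :=
  stmt15_general U Ω₁ Ω₂ Ω₁₂ t ht a Ωs hopen hM ψ hψ w hpde1 hpde2
end
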